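/- arXiv:1201.5449 — 6 statements merged into one kernel-verified Lean document; each statement's English description precedes it below -/
import Mathlib

section
/- Let (X, ρ, μ) be a space of homogeneous type. If the metric space (X, ρ) has the monotone geodesic property (M), then X has the relative annular decay property (RAD). -/
open MeasureTheory Metric Set
open scoped ENNReal NNReal

/-- `(X, ρ, μ)` is a space of homogeneous type with doubling constant `C`:
`0 < μ(B(x,2r)) ≤ C · μ(B(x,r)) < ∞` for every `x ∈ X`, `r > 0`. -/
def IsDoubling {X : Type*} [MetricSpace X] [MeasurableSpace X]
    (μ : Measure X) (C : ℝ≥0) : Prop :=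
  ∀ (x : X) (r : ℝ), 0 < r →
    0 < μ (ball x (2 * r)) ∧
    μ (ball x (2 * r)) ≤ (C : ℝ≥0∞) * μ (ball x r) ∧
    μ (ball x r) < ⊤

/-- The Hardy type inequality (H) for the couple of exponents `(ν, ν/(ν-1))`. -/
def HardyIneqAt {X : Type*} [MetricSpace X] [MeasurableSpace X]
    (μ : Measure X) (ν : ℝ) : Prop :=
  ∃ C : ℝ≥0, ∀ (z : X) (r : ℝ), 0 < r → ∀ f g : X → ℝ,
    Function.support f ⊆ ball z r →
    Function.support g ⊆ ball z (2 * r) \ ball z r →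
    MemLp f (ENNReal.ofReal ν) μ →
    MemLp g (ENNReal.ofReal (ν / (ν - 1))) μ →
    (∫⁻ y in ball z r, ∫⁻ x in ball z (2 * r) \ ball z r,
        ((‖f y‖₊ : ℝ≥0∞) * (‖g x‖₊ : ℝ≥0∞)) / μ (ball x (dist x y)) ∂μ ∂μ)
      ≤ (C : ℝ≥0∞) * eLpNorm f (ENNReal.ofReal ν) μ *
          eLpNorm g (ENNReal.ofReal (ν / (ν - 1))) μ

/-- The Hardy property (HP): the Hardy type inequality holds for every couple of
conjugate exponents `(ν, ν')`, `1 < ν < ∞`. -/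
def HardyProp {X : Type*} [MetricSpace X] [MeasurableSpace X]
    (μ : Measure X) : Prop :=
  ∀ ν : ℝ, 1 < ν → HardyIneqAt μ ν

/-- The union `B_ε` of the inner and outer layers of width `ε` of a set `B`. -/
def layerSet {X : Type*} [MetricSpace X] (B : Set X) (ε : ℝ) : Set X :=
  {x ∈ B | infDist x Bᶜ ≤ ε} ∪ {y ∈ Bᶜ | infDist y B ≤ ε}

/-- The layer decay property (LD). -/
def LayerDecay {X : Type*} [MetricSpace X] [MeasurableSpace X]
    (μ : Measure X) : Prop :=
  ∃ (η : ℝ) (C : ℝ≥0), 0 < η ∧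
    ∀ (z : X) (r : ℝ), 0 < r → ∀ ε : ℝ, 0 < ε →
      μ (layerSet (ball z r) ε) ≤
        (C : ℝ≥0∞) * ENNReal.ofReal ((ε / r) ^ η) * μ (ball z r)

/-- The relative layer decay property (RLD). -/
def RelLayerDecay {X : Type*} [MetricSpace X] [MeasurableSpace X]
    (μ : Measure X) : Prop :=
  ∃ (η : ℝ) (C : ℝ≥0), 0 < η ∧
    ∀ (z : X) (r : ℝ), 0 < r → ∀ (w : X) (R : ℝ), 0 < R → R ≤ 2 * r →
      ∀ ε : ℝ, 0 < ε →
        μ (layerSet (ball z r) ε ∩ ball w R) ≤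
          (C : ℝ≥0∞) * ENNReal.ofReal ((ε / R) ^ η) * μ (ball w R)

/-- The relative annular decay property (RAD). -/
def RelAnnularDecay {X : Type*} [MetricSpace X] [MeasurableSpace X]
    (μ : Measure X) : Prop :=
  ∃ (η : ℝ) (C : ℝ≥0), 0 < η ∧
    ∀ (z : X) (r s : ℝ), 0 < s → s < r → ∀ (w : X) (R : ℝ), 0 < R → R ≤ 2 * r →
      μ ((ball z r \ ball z (r - s)) ∩ ball w R) ≤
        (C : ℝ≥0∞) * ENNReal.ofReal ((s / R) ^ η) * μ (ball w R)

/-- The monotone geodesic property (M) of a metric space. -/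
def MonotoneGeodesicProp (X : Type*) [MetricSpace X] : Prop :=
  ∃ C : ℝ, ∀ u : ℝ, 0 < u → ∀ x y : X, u ≤ dist x y →
    ∃ z : X, dist z y ≤ C * u ∧ dist z x ≤ dist y x - u

/-- The homogeneous balls property (HB): every ball and every complement of a ball
is itself a space of homogeneous type, with a uniform doubling constant. -/
def HomogeneousBalls {X : Type*} [MetricSpace X] [MeasurableSpace X]
    (μ : Measure X) : Prop :=
  ∃ C : ℝ≥0, ∀ (z : X) (r : ℝ), 0 < r →
    (∀ x ∈ ball z r, ∀ s : ℝ, 0 < s →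
      μ (ball x (2 * s) ∩ ball z r) ≤ (C : ℝ≥0∞) * μ (ball x s ∩ ball z r)) ∧
    (∀ y ∉ ball z r, ∀ s : ℝ, 0 < s →
      μ (ball y (2 * s) ∩ (ball z r)ᶜ) ≤ (C : ℝ≥0∞) * μ (ball y s ∩ (ball z r)ᶜ))

namespace RADAux

variable {X : Type*} [MetricSpace X] [MeasurableSpace X] [BorelSpace X]
variable {μ : Measure X} {C_D : ℝ≥0}

theorem measure_ball_lt_top' (hμ : IsDoubling μ C_D) (x : X) (ρ : ℝ) :
    μ (ball x ρ) < ⊤ := by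
  rcases le_or_gt ρ 0 with h | h
  · simp [Metric.ball_eq_empty.2 h]
  · exact (hμ x ρ h).2.2

theorem measure_ball_pos' (hμ : IsDoubling μ C_D) (x : X) {ρ : ℝ} (h : 0 < ρ) :
    0 < μ (ball x ρ) := by
  have h2 := (hμ x (ρ / 2) (by linarith)).1
  rwa [show 2 * (ρ / 2) = ρ by ring] at h2

theorem doubling_pow (hμ : IsDoubling μ C_D) (n : ℕ) (x : X) {a : ℝ} (ha : 0 < a) :
    μ (ball x (2 ^ n * a)) ≤ (C_D : ℝ≥0∞) ^ n * μ (ball x a) := by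
  induction n with
  | zero => simp
  | succ n ih =>
    have h2 : (0 : ℝ) < 2 ^ n * a := by positivity
    have hd := (hμ x (2 ^ n * a) h2).2.1
    have he : (2 : ℝ) ^ (n + 1) * a = 2 * (2 ^ n * a) := by ring
    rw [he]
    calc μ (ball x (2 * (2 ^ n * a))) ≤ (C_D : ℝ≥0∞) * μ (ball x (2 ^ n * a)) := hd
      _ ≤ (C_D : ℝ≥0∞) * ((C_D : ℝ≥0∞) ^ n * μ (ball x a)) := by gcongr
      _ = (C_D : ℝ≥0∞) ^ (n + 1) * μ (ball x a) := by ring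

theorem measure_ball_le_pow (hμ : IsDoubling μ C_D) {x : X} {a b : ℝ} (ha : 0 < a)
    (n : ℕ) (h : b ≤ 2 ^ n * a) :
    μ (ball x b) ≤ (C_D : ℝ≥0∞) ^ n * μ (ball x a) :=
  (measure_mono (ball_subset_ball h)).trans (doubling_pow hμ n x ha)

theorem one_le_CD (hμ : IsDoubling μ C_D) (x : X) : (1 : ℝ) ≤ (C_D : ℝ) := by
  by_contra hlt
  push_neg at hlt
  have hpos : 0 < μ (ball x 2) := by
    have h := (hμ x 1 one_pos).1; rwa [show (2:ℝ) * 1 = 2 by norm_num] at h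
  have hfin : μ (ball x 2) ≠ ⊤ := (measure_ball_lt_top' hμ x 2).ne
  have h1 : μ (ball x 2) ≤ (C_D : ℝ≥0∞) * μ (ball x 1) := by
    have h := (hμ x 1 one_pos).2.1; rwa [show (2:ℝ) * 1 = 2 by norm_num] at h
  have h2 : (C_D : ℝ≥0∞) * μ (ball x 1) ≤ (C_D : ℝ≥0∞) * μ (ball x 2) :=
    mul_le_mul_right (measure_mono (ball_subset_ball (by norm_num))) _
  have hC1 : (C_D : ℝ≥0∞) < 1 := by
    rw [← ENNReal.coe_one, ENNReal.coe_lt_coe]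
    exact_mod_cast hlt
  have h3 : (C_D : ℝ≥0∞) * μ (ball x 2) < 1 * μ (ball x 2) :=
    by
      rw [mul_comm _ (μ (ball x 2)), mul_comm 1 (μ (ball x 2))]
      exact ENNReal.mul_lt_mul_right hpos.ne' hfin hC1
  rw [one_mul] at h3
  exact absurd (h1.trans h2) (not_le.2 h3)

theorem geom_sum_le_pow {Λ : ℝ} (hΛ : 2 ≤ Λ) (n : ℕ) :
    ∑ i ∈ Finset.range n, Λ ^ i ≤ Λ ^ n := by
  induction n with
  | zero => simp
  | succ n ih =>
    rw [Finset.sum_range_succ, pow_succ]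
    have h1 : (0:ℝ) < Λ ^ n := pow_pos (by linarith) n
    nlinarith

/-- The key iteration step: the thin annulus intersected with a ball is dominated by
a definite fraction of a thicker annulus intersected with a slightly larger ball. -/
theorem step (hμ : IsDoubling μ C_D) {C₀ : ℝ} (hC₀ : 1 ≤ C₀)
    (hM' : ∀ u : ℝ, 0 < u → ∀ x y : X, u ≤ dist x y →
      ∃ p : X, dist p y ≤ C₀ * u ∧ dist p x ≤ dist y x - u)
    {m : ℕ} (hm : 14 * (2 * C₀ + 1) ≤ 2 ^ m)
    (z w : X) (r R' t : ℝ) (ht : 0 < t) (htr : 4 * t ≤ r) :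
    μ ((ball z r \ ball z (r - t)) ∩ ball w R') ≤
      ENNReal.ofReal ((C_D : ℝ) ^ m / ((C_D : ℝ) ^ m + 1)) *
        μ ((ball z r \ ball z (r - (2 * C₀ + 2) * t)) ∩
            ball w (R' + (2 * C₀ + 1) * t)) := by
  classical
  have hCD : (1:ℝ) ≤ (C_D : ℝ) := one_le_CD hμ z
  set M : ℝ := 2 * C₀ + 1 with hMdef
  have hM3 : 3 ≤ M := by rw [hMdef]; linarith
  have hMt : 0 < M * t := by nlinarith
  set S : Set X := (ball z r \ ball z (r - t)) ∩ ball w R' with hSdef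
  have hSmem : ∀ b ∈ S, dist b z < r ∧ r - t ≤ dist b z ∧ dist b w < R' := by
    intro b hb
    refine ⟨mem_ball.1 hb.1.1, ?_, mem_ball.1 hb.2⟩
    by_contra hcon
    push_neg at hcon
    exact hb.1.2 (mem_ball.2 hcon)
  have hex : ∀ b ∈ S, ∃ p : X, dist p b ≤ C₀ * (1.5 * t) ∧
      dist p z ≤ dist b z - 1.5 * t := by
    intro b hb
    obtain ⟨h1, h2, h3⟩ := hSmem b hb
    have hu : 1.5 * t ≤ dist z b := by rw [dist_comm]; linarith
    obtain ⟨p, hp1, hp2⟩ := hM' (1.5 * t) (by linarith) z b hu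
    exact ⟨p, hp1, hp2⟩
  set P : X → X := fun b => if hb : b ∈ S then (hex b hb).choose else b with hPdef
  have hP1 : ∀ b ∈ S, dist (P b) b ≤ C₀ * (1.5 * t) := by
    intro b hb
    simp only [hPdef, dif_pos hb]
    exact (hex b hb).choose_spec.1
  have hP2 : ∀ b ∈ S, dist (P b) z ≤ dist b z - 1.5 * t := by
    intro b hb
    simp only [hPdef, dif_pos hb]
    exact (hex b hb).choose_spec.2
  have hHsubCB : ∀ b, ball (P b) (t / 2) ⊆ closedBall b (M * t) := by
    intro b q hq
    rw [mem_closedBall]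
    have hq1 : dist q (P b) < t / 2 := mem_ball.1 hq
    have tr := dist_triangle q (P b) b
    by_cases hb : b ∈ S
    · have h1 := hP1 b hb
      rw [hMdef]; nlinarith
    · have hPb : P b = b := by simp only [hPdef, dif_neg hb]
      rw [hPb] at hq1
      rw [hMdef]; nlinarith [dist_nonneg (x := q) (y := b)]
  obtain ⟨u, huS, hdisj, hcov⟩ :=
    Vitali.exists_disjoint_subfamily_covering_enlargement_closedBall S (fun b => b)
      (fun _ => M * t) (M * t) (fun a _ => le_rfl) 4 (by norm_num)
  set T : Set X := (ball z r \ ball z (r - (2 * C₀ + 2) * t)) ∩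
      ball w (R' + M * t) with hTdef
  set S' : Set X := (ball z r \ ball z (r - t)) ∩ ball w (R' + M * t) with hS'def
  have hhole : ∀ b ∈ u, ball (P b) (t / 2) ⊆ T \ S' := by
    intro b hbu q hq
    have hbS : b ∈ S := huS hbu
    obtain ⟨hb1, hb2, hb3⟩ := hSmem b hbS
    have h1 := hP1 b hbS
    have h2 := hP2 b hbS
    have hq1 : dist q (P b) < t / 2 := mem_ball.1 hq
    have tr1 := dist_triangle q (P b) z
    have tr2 := dist_triangle b q z
    have tr3 := dist_triangle q (P b) b
    have tr4 := dist_triangle q b w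
    have e1 : dist b q = dist q b := dist_comm b q
    have hqz1 : dist q z < r - t := by linarith
    have hqz2 : r - (2 * C₀ + 2) * t ≤ dist q z := by nlinarith
    have hqb : dist q b < M * t := by rw [hMdef]; nlinarith
    have hqw : dist q w < R' + M * t := by linarith
    refine ⟨⟨⟨mem_ball.2 (by linarith), fun hc => ?_⟩, mem_ball.2 hqw⟩, fun hc => ?_⟩
    · exact absurd (mem_ball.1 hc) (not_lt.2 hqz2)
    · exact hc.1.2 (mem_ball.2 hqz1)
  have hScov : S ⊆ ⋃ b ∈ u, ball b (5 * (M * t)) := by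
    intro y hy
    obtain ⟨b, hbu, hsub⟩ := hcov y hy
    have hy2 : y ∈ closedBall b (4 * (M * t)) := hsub (mem_closedBall_self (by linarith))
    exact mem_biUnion hbu (closedBall_subset_ball (by nlinarith) hy2)
  have hcnt : u.Countable := by
    have hdisj' : Pairwise (Function.onFun Disjoint
        fun b : u => closedBall (b : X) (M * t)) := by
      intro i j hij
      exact hdisj i.2 j.2 fun h => hij (Subtype.ext h)
    have hfin : μ (⋃ b : u, closedBall (b : X) (M * t)) ≠ ⊤ := by
      refine ((measure_mono ?_).trans_lt
        (measure_ball_lt_top' hμ w (R' + 2 * (M * t)))).ne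
      intro q hq
      obtain ⟨b, hb⟩ := mem_iUnion.1 hq
      have h3 := (hSmem _ (huS b.2)).2.2
      have hqb := mem_closedBall.1 hb
      have tr := dist_triangle q (b : X) w
      exact mem_ball.2 (by linarith)
    have hc := MeasureTheory.Measure.countable_meas_pos_of_disjoint_of_meas_iUnion_ne_top μ
      (fun b : u => measurableSet_closedBall) hdisj' hfin
    have hall : {b : u | 0 < μ (closedBall (b : X) (M * t))} = Set.univ := by
      refine Set.eq_univ_of_forall fun b => ?_
      exact (measure_ball_pos' hμ _ hMt).trans_le (measure_mono ball_subset_closedBall)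
    rw [hall] at hc
    rw [← Set.countable_coe_iff]
    exact countable_univ_iff.mp hc
  have hHdisj : u.PairwiseDisjoint fun b => ball (P b) (t / 2) :=
    hdisj.mono fun b => hHsubCB b
  set K : ℝ≥0∞ := (C_D : ℝ≥0∞) ^ m with hKdef
  have key : μ S ≤ K * μ (T \ S') := by
    calc μ S ≤ μ (⋃ b ∈ u, ball b (5 * (M * t))) := measure_mono hScov
      _ ≤ ∑' b : u, μ (ball (b : X) (5 * (M * t))) := measure_biUnion_le μ hcnt _
      _ ≤ ∑' b : u, K * μ (ball (P (b : X)) (t / 2)) := by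
          refine ENNReal.tsum_le_tsum fun b => ?_
          refine (measure_mono (ball_subset_ball' ?_)).trans
            (doubling_pow hμ m _ (by linarith))
          have h1 : dist (b : X) (P (b : X)) ≤ C₀ * (1.5 * t) := by
            rw [dist_comm]
            exact hP1 _ (huS b.2)
          have h2 : 14 * M * t ≤ 2 ^ m * t := by
            apply mul_le_mul_of_nonneg_right _ ht.le
            rw [hMdef]; linarith
          rw [hMdef] at *
          nlinarith
      _ = K * ∑' b : u, μ (ball (P (b : X)) (t / 2)) := ENNReal.tsum_mul_left
      _ ≤ K * μ (T \ S') := by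
          refine mul_le_mul_right ?_ K
          rw [← measure_biUnion hcnt hHdisj fun b _ => measurableSet_ball]
          exact measure_mono (Set.iUnion₂_subset hhole)
  have hS'T : S' ⊆ T := by
    refine Set.inter_subset_inter ?_ Subset.rfl
    refine Set.diff_subset_diff_right (ball_subset_ball ?_)
    nlinarith
  have hfinS' : μ S' ≠ ⊤ :=
    ((measure_mono Set.inter_subset_right).trans_lt (measure_ball_lt_top' hμ _ _)).ne
  have hmS' : MeasurableSet S' :=
    (measurableSet_ball.diff measurableSet_ball).inter measurableSet_ball
  have hSsubS' : S ⊆ S' :=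
    Set.inter_subset_inter Subset.rfl (ball_subset_ball (by linarith))
  have hSsubT : S ⊆ T := hSsubS'.trans hS'T
  have hdiffeq : μ (T \ S') = μ T - μ S' :=
    measure_diff hS'T hmS'.nullMeasurableSet hfinS'
  have h1 : μ S ≤ K * (μ T - μ S) := by
    refine key.trans ?_
    rw [hdiffeq]
    exact mul_le_mul_right (tsub_le_tsub_left (measure_mono hSsubS') _) _
  have h2 : K * μ S + μ S ≤ K * μ T := by
    calc K * μ S + μ S ≤ K * μ S + K * (μ T - μ S) := add_le_add_right h1 _
      _ = K * (μ S + (μ T - μ S)) := by rw [mul_add]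
      _ = K * μ T := by rw [add_tsub_cancel_of_le (measure_mono hSsubT)]
  have hKof : K = ENNReal.ofReal ((C_D : ℝ) ^ m) := by
    rw [ENNReal.ofReal_pow C_D.coe_nonneg, ENNReal.ofReal_coe_nnreal]
  have hKr1 : (0:ℝ) < (C_D : ℝ) ^ m + 1 := by positivity
  have hKne : K ≠ ⊤ := by
    rw [hKdef]
    exact ENNReal.pow_ne_top ENNReal.coe_ne_top
  rw [ENNReal.ofReal_div_of_pos hKr1, ENNReal.ofReal_add (by positivity) zero_le_one,
    ENNReal.ofReal_one, ← hKof]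
  have hrw : K / (K + 1) * μ T = K * μ T / (K + 1) := by
    rw [div_eq_mul_inv, div_eq_mul_inv]; ring
  rw [hrw]
  rw [ENNReal.le_div_iff_mul_le (Or.inl (by simp)) (Or.inl (by simp [hKne]))]
  calc μ S * (K + 1) = K * μ S + μ S := by ring
    _ ≤ K * μ T := h2

/-- Iterating the step lemma. -/
theorem iterate (hμ : IsDoubling μ C_D) {C₀ : ℝ} (hC₀ : 1 ≤ C₀)
    (hM' : ∀ u : ℝ, 0 < u → ∀ x y : X, u ≤ dist x y →
      ∃ p : X, dist p y ≤ C₀ * u ∧ dist p x ≤ dist y x - u)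
    {m : ℕ} (hm : 14 * (2 * C₀ + 1) ≤ 2 ^ m)
    (z w : X) (r R s : ℝ) (hs : 0 < s) (j : ℕ)
    (hj : ∀ i < j, 4 * ((2 * C₀ + 2) ^ i * s) ≤ r) :
    μ ((ball z r \ ball z (r - s)) ∩ ball w R) ≤
      ENNReal.ofReal ((C_D : ℝ) ^ m / ((C_D : ℝ) ^ m + 1)) ^ j *
        μ ((ball z r \ ball z (r - (2 * C₀ + 2) ^ j * s)) ∩
          ball w (R + (2 * C₀ + 1) * s * ∑ i ∈ Finset.range j, (2 * C₀ + 2) ^ i)) := by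
  induction j with
  | zero => simp
  | succ j ih =>
    have hstep := step hμ hC₀ hM' hm z w r
      (R + (2 * C₀ + 1) * s * ∑ i ∈ Finset.range j, (2 * C₀ + 2) ^ i)
      ((2 * C₀ + 2) ^ j * s) (mul_pos (pow_pos (by linarith) j) hs)
      (hj j (lt_add_one j))
    have e1 : (2 * C₀ + 2) * ((2 * C₀ + 2) ^ j * s) = (2 * C₀ + 2) ^ (j + 1) * s := by
      rw [pow_succ]; ring
    have e2 : R + (2 * C₀ + 1) * s * (∑ i ∈ Finset.range j, (2 * C₀ + 2) ^ i) +
        (2 * C₀ + 1) * ((2 * C₀ + 2) ^ j * s) =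
        R + (2 * C₀ + 1) * s * ∑ i ∈ Finset.range (j + 1), (2 * C₀ + 2) ^ i := by
      rw [Finset.sum_range_succ]; ring
    rw [e1, e2] at hstep
    calc μ ((ball z r \ ball z (r - s)) ∩ ball w R)
        ≤ ENNReal.ofReal ((C_D : ℝ) ^ m / ((C_D : ℝ) ^ m + 1)) ^ j *
          μ ((ball z r \ ball z (r - (2 * C₀ + 2) ^ j * s)) ∩
            ball w (R + (2 * C₀ + 1) * s * ∑ i ∈ Finset.range j, (2 * C₀ + 2) ^ i)) :=
          ih fun i hi => hj i (hi.trans (lt_add_one j))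
      _ ≤ ENNReal.ofReal ((C_D : ℝ) ^ m / ((C_D : ℝ) ^ m + 1)) ^ j *
          (ENNReal.ofReal ((C_D : ℝ) ^ m / ((C_D : ℝ) ^ m + 1)) *
            μ ((ball z r \ ball z (r - (2 * C₀ + 2) ^ (j + 1) * s)) ∩
              ball w (R + (2 * C₀ + 1) * s *
                ∑ i ∈ Finset.range (j + 1), (2 * C₀ + 2) ^ i))) :=
          mul_le_mul_right hstep _
      _ = ENNReal.ofReal ((C_D : ℝ) ^ m / ((C_D : ℝ) ^ m + 1)) ^ (j + 1) *
          μ ((ball z r \ ball z (r - (2 * C₀ + 2) ^ (j + 1) * s)) ∩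
            ball w (R + (2 * C₀ + 1) * s *
              ∑ i ∈ Finset.range (j + 1), (2 * C₀ + 2) ^ i)) := by
          rw [pow_succ]; ring

end RADAux

/-- In a space of homogeneous type, the monotone geodesic property (M)
implies the relative annular decay property (RAD). -/
theorem monotoneGeodesic_implies_relAnnularDecay
    {X : Type*} [MetricSpace X] [MeasurableSpace X] [BorelSpace X]
    (μ : Measure X) (C_D : ℝ≥0) (hμ : IsDoubling μ C_D)
    (hM : MonotoneGeodesicProp X) :
    RelAnnularDecay μ := by
  rcases isEmpty_or_nonempty X with hE | hNE
  · exact ⟨1, 1, one_pos, fun z => (hE.false z).elim⟩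
  obtain ⟨x₀⟩ := hNE
  obtain ⟨C, hC⟩ := hM
  set C₀ : ℝ := max C 1 with hC₀def
  have hC₀ : 1 ≤ C₀ := le_max_right _ _
  have hM' : ∀ u : ℝ, 0 < u → ∀ x y : X, u ≤ dist x y →
      ∃ p : X, dist p y ≤ C₀ * u ∧ dist p x ≤ dist y x - u := by
    intro u hu x y h
    obtain ⟨p, h1, h2⟩ := hC u hu x y h
    exact ⟨p, h1.trans (mul_le_mul_of_nonneg_right (le_max_left _ _) hu.le), h2⟩
  have hCD : 1 ≤ (C_D : ℝ) := RADAux.one_le_CD hμ x₀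
  obtain ⟨m, hmlt⟩ := pow_unbounded_of_one_lt (y := (2:ℝ)) (14 * (2 * C₀ + 1)) one_lt_two
  have hm : 14 * (2 * C₀ + 1) ≤ 2 ^ m := hmlt.le
  have hΛ2 : (2:ℝ) ≤ 2 * C₀ + 2 := by linarith
  have hΛ1 : (1:ℝ) < 2 * C₀ + 2 := by linarith
  have hΛpos : (0:ℝ) < 2 * C₀ + 2 := by linarith
  have hKpos : (0:ℝ) < (C_D : ℝ) ^ m := pow_pos (by linarith) m
  have hθpos : (0:ℝ) < (C_D : ℝ) ^ m / ((C_D : ℝ) ^ m + 1) :=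
    div_pos hKpos (by linarith)
  have hθlt : (C_D : ℝ) ^ m / ((C_D : ℝ) ^ m + 1) < 1 :=
    (div_lt_one (by linarith)).2 (by linarith)
  have hlogΛ : 0 < Real.log (2 * C₀ + 2) := Real.log_pos hΛ1
  set η : ℝ := -Real.log ((C_D : ℝ) ^ m / ((C_D : ℝ) ^ m + 1)) /
    Real.log (2 * C₀ + 2) with hηdef
  have hη : 0 < η := div_pos (neg_pos.2 (Real.log_neg hθpos hθlt)) hlogΛ
  obtain ⟨m', hm'lt⟩ := pow_unbounded_of_one_lt (y := (2:ℝ))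
    (1 + (2 * C₀ + 1) * (2 * C₀ + 2) / 8) one_lt_two
  refine ⟨η, C_D ^ m' * Real.toNNReal (8 ^ η), hη, ?_⟩
  intro z r s hs hsr w R hR hRr
  have hCcast : ((C_D ^ m' * Real.toNNReal (8 ^ η) : ℝ≥0) : ℝ≥0∞) =
      (C_D : ℝ≥0∞) ^ m' * ENNReal.ofReal (8 ^ η) := by
    rw [ENNReal.coe_mul, ENNReal.coe_pow]
    rfl
  have hCD1 : (1:ℝ≥0∞) ≤ (C_D : ℝ≥0∞) ^ m' := by
    refine one_le_pow_of_one_le' ?_ m'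
    rw [← ENNReal.coe_one, ENNReal.coe_le_coe]
    exact_mod_cast hCD
  rcases lt_or_ge (R / 8) s with hcase | hcase
  · -- trivial case : s is comparable to R
    have hfrac : (8:ℝ)⁻¹ ≤ s / R := by
      rw [inv_eq_one_div, div_le_div_iff₀ (by norm_num) hR]
      linarith
    have hrp : (8:ℝ)⁻¹ ^ η ≤ (s / R) ^ η :=
      Real.rpow_le_rpow (by norm_num) hfrac hη.le
    have h8 : (1:ℝ≥0∞) = ENNReal.ofReal ((8:ℝ) ^ η) * ENNReal.ofReal ((8:ℝ)⁻¹ ^ η) := by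
      rw [← ENNReal.ofReal_mul (by positivity),
        ← Real.mul_rpow (by norm_num) (by norm_num)]
      norm_num
    have hone : (1 : ℝ≥0∞) ≤ ((C_D ^ m' * Real.toNNReal (8 ^ η) : ℝ≥0) : ℝ≥0∞) *
        ENNReal.ofReal ((s / R) ^ η) := by
      rw [hCcast, h8]
      calc ENNReal.ofReal ((8:ℝ) ^ η) * ENNReal.ofReal ((8:ℝ)⁻¹ ^ η)
          = 1 * ENNReal.ofReal ((8:ℝ) ^ η) * ENNReal.ofReal ((8:ℝ)⁻¹ ^ η) := by
            rw [one_mul]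
        _ ≤ (C_D : ℝ≥0∞) ^ m' * ENNReal.ofReal ((8:ℝ) ^ η) *
            ENNReal.ofReal ((s / R) ^ η) :=
            mul_le_mul' (mul_le_mul' hCD1 le_rfl) (ENNReal.ofReal_le_ofReal hrp)
    calc μ ((ball z r \ ball z (r - s)) ∩ ball w R)
        ≤ μ (ball w R) := measure_mono Set.inter_subset_right
      _ = 1 * μ (ball w R) := (one_mul _).symm
      _ ≤ ((C_D ^ m' * Real.toNNReal (8 ^ η) : ℝ≥0) : ℝ≥0∞) *
          ENNReal.ofReal ((s / R) ^ η) * μ (ball w R) := mul_le_mul_left hone _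
  · -- main case : s ≤ R / 8
    have hex : ∃ j : ℕ, R / 8 < (2 * C₀ + 2) ^ j * s := by
      obtain ⟨j, hj⟩ := pow_unbounded_of_one_lt (y := (2 * C₀ + 2)) (R / (8 * s)) hΛ1
      refine ⟨j, ?_⟩
      rw [div_lt_iff₀ (by positivity)] at hj
      have hp : (0:ℝ) < (2 * C₀ + 2) ^ j := pow_pos hΛpos j
      nlinarith
    obtain ⟨J, hJspec, hJmin⟩ : ∃ J : ℕ, R / 8 < (2 * C₀ + 2) ^ J * s ∧
        ∀ i < J, (2 * C₀ + 2) ^ i * s ≤ R / 8 :=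
      ⟨Nat.find hex, Nat.find_spec hex, fun i hi => not_lt.1 (Nat.find_min hex hi)⟩
    have hJ1 : J ≠ 0 := by
      intro h
      rw [h, pow_zero, one_mul] at hJspec
      linarith
    obtain ⟨J', hJ'⟩ : ∃ J', J = J' + 1 := ⟨J - 1, (Nat.succ_pred_eq_of_ne_zero hJ1).symm⟩
    have hiter := RADAux.iterate hμ hC₀ hM' hm z w r R s hs J
      (fun i hi => by
        have h1 := hJmin i hi
        have h2 : (0:ℝ) < (2 * C₀ + 2) ^ i * s := mul_pos (pow_pos hΛpos i) hs
        linarith)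
    -- bound the measure of the final set
    have hsum : (2 * C₀ + 1) * s * ∑ i ∈ Finset.range J, (2 * C₀ + 2) ^ i ≤
        (2 * C₀ + 1) * (2 * C₀ + 2) / 8 * R := by
      have h1 : ∑ i ∈ Finset.range J, (2 * C₀ + 2) ^ i ≤ (2 * C₀ + 2) ^ J :=
        RADAux.geom_sum_le_pow hΛ2 J
      have h2 : (2 * C₀ + 2) ^ J * s ≤ (2 * C₀ + 2) * (R / 8) := by
        rw [hJ', pow_succ, mul_comm ((2 * C₀ + 2) ^ J') (2 * C₀ + 2), mul_assoc]
        have h3 := hJmin J' (by omega)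
        nlinarith
      have ha : s * ∑ i ∈ Finset.range J, (2 * C₀ + 2) ^ i ≤ s * (2 * C₀ + 2) ^ J :=
        mul_le_mul_of_nonneg_left h1 hs.le
      have hb : s * (2 * C₀ + 2) ^ J ≤ (2 * C₀ + 2) * (R / 8) := by
        rw [mul_comm]; exact h2
      have hc : (0:ℝ) ≤ 2 * C₀ + 1 := by linarith
      calc (2 * C₀ + 1) * s * ∑ i ∈ Finset.range J, (2 * C₀ + 2) ^ i
          = (2 * C₀ + 1) * (s * ∑ i ∈ Finset.range J, (2 * C₀ + 2) ^ i) := by ring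
        _ ≤ (2 * C₀ + 1) * ((2 * C₀ + 2) * (R / 8)) :=
            mul_le_mul_of_nonneg_left (ha.trans hb) hc
        _ = (2 * C₀ + 1) * (2 * C₀ + 2) / 8 * R := by ring
    have hfinalball : μ ((ball z r \ ball z (r - (2 * C₀ + 2) ^ J * s)) ∩
        ball w (R + (2 * C₀ + 1) * s * ∑ i ∈ Finset.range J, (2 * C₀ + 2) ^ i)) ≤
        (C_D : ℝ≥0∞) ^ m' * μ (ball w R) := by
      refine (measure_mono Set.inter_subset_right).trans ?_
      refine RADAux.measure_ball_le_pow hμ hR m' ?_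
      nlinarith [hm'lt]
    -- bound the geometric factor
    have hθJ : ((C_D : ℝ) ^ m / ((C_D : ℝ) ^ m + 1)) ^ J ≤ 8 ^ η * (s / R) ^ η := by
      have hΛJpos : (0:ℝ) < (2 * C₀ + 2) ^ J := pow_pos hΛpos J
      have hηΛ : η * Real.log (2 * C₀ + 2) =
          -Real.log ((C_D : ℝ) ^ m / ((C_D : ℝ) ^ m + 1)) := by
        rw [hηdef, div_mul_cancel₀ _ hlogΛ.ne']
      have heq : ((C_D : ℝ) ^ m / ((C_D : ℝ) ^ m + 1)) ^ J =
          (((2 * C₀ + 2) ^ J)⁻¹) ^ η := by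
        rw [Real.rpow_def_of_pos (inv_pos.2 hΛJpos), Real.log_inv, Real.log_pow]
        have harg : -((J:ℝ) * Real.log (2 * C₀ + 2)) * η =
            (J:ℝ) * Real.log ((C_D : ℝ) ^ m / ((C_D : ℝ) ^ m + 1)) := by
          have hr : -((J:ℝ) * Real.log (2 * C₀ + 2)) * η =
              -(J:ℝ) * (η * Real.log (2 * C₀ + 2)) := by ring
          rw [hr, hηΛ]; ring
        rw [harg, Real.exp_nat_mul, Real.exp_log hθpos]
      have hlt : ((2 * C₀ + 2) ^ J)⁻¹ ≤ 8 * s / R := by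
        rw [inv_eq_one_div]
        rw [div_le_div_iff₀ hΛJpos hR]
        nlinarith
      have hmono : (((2 * C₀ + 2) ^ J)⁻¹) ^ η ≤ (8 * s / R) ^ η :=
        Real.rpow_le_rpow (by positivity) hlt hη.le
      have hsplit : (8 * s / R : ℝ) ^ η = 8 ^ η * (s / R) ^ η := by
        rw [show (8 * s / R : ℝ) = 8 * (s / R) by ring,
          Real.mul_rpow (by norm_num) (by positivity)]
      rw [heq]
      rw [hsplit] at hmono
      exact hmono
    calc μ ((ball z r \ ball z (r - s)) ∩ ball w R)
        ≤ ENNReal.ofReal ((C_D : ℝ) ^ m / ((C_D : ℝ) ^ m + 1)) ^ J *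
          μ ((ball z r \ ball z (r - (2 * C₀ + 2) ^ J * s)) ∩
            ball w (R + (2 * C₀ + 1) * s *
              ∑ i ∈ Finset.range J, (2 * C₀ + 2) ^ i)) := hiter
      _ ≤ ENNReal.ofReal ((C_D : ℝ) ^ m / ((C_D : ℝ) ^ m + 1)) ^ J *
          ((C_D : ℝ≥0∞) ^ m' * μ (ball w R)) := mul_le_mul_right hfinalball _
      _ = ENNReal.ofReal (((C_D : ℝ) ^ m / ((C_D : ℝ) ^ m + 1)) ^ J) *
          ((C_D : ℝ≥0∞) ^ m' * μ (ball w R)) := by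
          rw [← ENNReal.ofReal_pow hθpos.le]
      _ ≤ ENNReal.ofReal (8 ^ η * (s / R) ^ η) *
          ((C_D : ℝ≥0∞) ^ m' * μ (ball w R)) :=
          mul_le_mul_left (ENNReal.ofReal_le_ofReal hθJ) _
      _ = ((C_D ^ m' * Real.toNNReal (8 ^ η) : ℝ≥0) : ℝ≥0∞) *
          ENNReal.ofReal ((s / R) ^ η) * μ (ball w R) := by
          rw [hCcast, ENNReal.ofReal_mul (by positivity)]
          ring
end

section
/- Let (X, ρ, μ) be a space of homogeneous type with doubling constant C_D whose metric satisfies the monotone geodesic property (M) with constant C. Then there exists a constant C' < ∞, depending only on C_D and C, such that for every ball B = B(x, r₀) in X, every y ∈ B and every r > 0, μ(B(y,2r) ∩ B) ≤ C' μ(B(y,r) ∩ B); that is, every ball of X, equipped with the restricted metric and measure, is itself a space of homogeneous type with a uniform doubling constant. -/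
open MeasureTheory Metric Set
open scoped ENNReal NNReal

/-- In a space of homogeneous type (doubling constant `C_D`) whose metric
has the monotone geodesic property (M) with constant `C`, there is a uniform constant
`C'` such that every ball, with the restricted metric and measure, is itself doubling:
`μ(B(y,2r) ∩ B) ≤ C' μ(B(y,r) ∩ B)` for every ball `B = B(x,r₀)`, `y ∈ B`, `r > 0`. -/
theorem monotoneGeodesic_balls_uniformly_doubling
    {X : Type*} [MetricSpace X] [MeasurableSpace X] [BorelSpace X]
    (μ : Measure X) (C_D : ℝ≥0) (hμ : IsDoubling μ C_D)
    (C : ℝ)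
    (hM : ∀ u : ℝ, 0 < u → ∀ x y : X, u ≤ dist x y →
      ∃ z : X, dist z y ≤ C * u ∧ dist z x ≤ dist y x - u) :
    ∃ C' : ℝ≥0, ∀ (x : X) (r₀ : ℝ), 0 < r₀ → ∀ y ∈ ball x r₀, ∀ r : ℝ, 0 < r →
      μ (ball y (2 * r) ∩ ball x r₀) ≤ (C' : ℝ≥0∞) * μ (ball y r ∩ ball x r₀) := by
    classical
  set C₁ : ℝ := max C 0 with hC₁def
  have hC₁0 : (0:ℝ) ≤ C₁ := le_max_right _ _
  have hCle : C ≤ C₁ := le_max_left _ _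
  obtain ⟨k, hk⟩ := pow_unbounded_of_one_lt (6*(C₁+1)) (one_lt_two (α := ℝ))
  refine ⟨C_D ^ k, ?_⟩
  intro x r₀ hr₀ y hy r hr
  -- C_D ≥ 1
  have h1 : (1:ℝ≥0∞) ≤ (C_D:ℝ≥0∞) := by
    obtain ⟨h0, hle, hfin⟩ := hμ x 1 one_pos
    have hsub : μ (ball x 1) ≤ μ (ball x (2*1)) :=
      measure_mono (ball_subset_ball (by norm_num))
    have hpos : μ (ball x 1) ≠ 0 := by
      intro h
      rw [h, mul_zero] at hle
      exact absurd (h0.trans_le hle) (lt_irrefl _)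
    have htop : μ (ball x 1) ≠ ⊤ := hfin.ne
    have : 1 * μ (ball x 1) ≤ (C_D:ℝ≥0∞) * μ (ball x 1) := by
      rw [one_mul]; exact hsub.trans hle
    exact (ENNReal.mul_le_mul_iff_left hpos htop).mp this
  have h1k : (1:ℝ≥0∞) ≤ ((C_D:ℝ≥0∞)) ^ k := one_le_pow_of_one_le' h1 k
  -- iterated doubling
  have hdb : ∀ (n : ℕ) (z : X) (s : ℝ), 0 < s →
      μ (ball z (2 ^ n * s)) ≤ ((C_D:ℝ≥0∞)) ^ n * μ (ball z s) := by
    intro n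
    induction n with
    | zero => intro z s hs; simp
    | succ n ih =>
      intro z s hs
      have hs' : 0 < 2 ^ n * s := by positivity
      have h2 := (hμ z (2 ^ n * s) hs').2.1
      have : (2:ℝ) ^ (n+1) * s = 2 * (2 ^ n * s) := by ring
      rw [this]
      calc μ (ball z (2 * (2 ^ n * s))) ≤ (C_D:ℝ≥0∞) * μ (ball z (2 ^ n * s)) := h2
        _ ≤ (C_D:ℝ≥0∞) * (((C_D:ℝ≥0∞)) ^ n * μ (ball z s)) := by
            exact mul_le_mul_right (ih z s hs) _
        _ = ((C_D:ℝ≥0∞)) ^ (n+1) * μ (ball z s) := by ring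
  by_cases hcase : 2 * r₀ ≤ r
  · -- large r : ball x r₀ ⊆ ball y r
    have hsub : ball x r₀ ⊆ ball y r := by
      intro w hw
      rw [mem_ball] at hw hy ⊢
      have := dist_triangle w x y
      have hxy : dist x y = dist y x := dist_comm x y
      linarith [hw, hy]
    have heq : ball y r ∩ ball x r₀ = ball x r₀ := inter_eq_right.mpr hsub
    calc μ (ball y (2*r) ∩ ball x r₀) ≤ μ (ball x r₀) := measure_mono inter_subset_right
      _ = μ (ball y r ∩ ball x r₀) := by rw [heq]
      _ ≤ ((C_D:ℝ≥0∞)) ^ k * μ (ball y r ∩ ball x r₀) := le_mul_of_one_le_left zero_le h1k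
      _ = ((C_D ^ k : ℝ≥0) : ℝ≥0∞) * μ (ball y r ∩ ball x r₀) := by push_cast; ring
  · push_neg at hcase
    have hC1pos : (0:ℝ) < C₁ + 1 := by linarith
    set u : ℝ := r / (2 * (C₁ + 1)) with hudef
    have hu : 0 < u := by positivity
    have hru : r = 2 * (C₁ + 1) * u := by
      rw [hudef]; field_simp
    have huhalf : (C₁ + 1) * u = r / 2 := by rw [hru]; ring
    have hule : u ≤ r / 2 := by nlinarith
    -- find a good center z
    have key : ∃ z : X, dist z y ≤ r ∧ ball z u ⊆ ball y r ∩ ball x r₀ := by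
      by_cases hd : u ≤ dist x y
      · obtain ⟨z, hzy, hzx⟩ := hM u hu x y hd
        have hzy' : dist z y ≤ C₁ * u := hzy.trans (by nlinarith)
        refine ⟨z, ?_, ?_⟩
        · nlinarith
        · intro w hw
          rw [mem_ball] at hw
          constructor
          · rw [mem_ball]
            have := dist_triangle w z y
            nlinarith
          · rw [mem_ball]
            have h1 := dist_triangle w z x
            have h2 : dist y x = dist x y := dist_comm y x
            rw [mem_ball] at hy
            nlinarith
      · push_neg at hd
        refine ⟨x, ?_, ?_⟩
        · have : dist x y = dist y x := dist_comm x y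
          rw [mem_ball] at hy
          linarith [dist_nonneg (x := y) (y := x)]
        · intro w hw
          rw [mem_ball] at hw
          constructor
          · rw [mem_ball]
            have := dist_triangle w x y
            nlinarith
          · rw [mem_ball]
            have : u < r₀ := by nlinarith
            linarith
    obtain ⟨z, hzy, hzsub⟩ := key
    have hbig : ball y (2 * r) ⊆ ball z ((2:ℝ) ^ k * u) := by
      intro w hw
      rw [mem_ball] at hw ⊢
      have h1 := dist_triangle w y z
      have h2 : dist y z = dist z y := dist_comm y z
      have h3 : 6 * (C₁ + 1) * u ≤ 2 ^ k * u := by nlinarith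
      nlinarith
    calc μ (ball y (2*r) ∩ ball x r₀) ≤ μ (ball z ((2:ℝ) ^ k * u)) :=
          measure_mono (inter_subset_left.trans hbig)
      _ ≤ ((C_D:ℝ≥0∞)) ^ k * μ (ball z u) := hdb k z u hu
      _ ≤ ((C_D:ℝ≥0∞)) ^ k * μ (ball y r ∩ ball x r₀) :=
          mul_le_mul_right (measure_mono hzsub) _
      _ = ((C_D ^ k : ℝ≥0) : ℝ≥0∞) * μ (ball y r ∩ ball x r₀) := by push_cast; ring
end

section
/- Let (X, ρ, μ) be a space of homogeneous type, and let φ : [0,∞) → ℝ be a C¹ function with φ ≥ 0, supp φ ⊂ [1,4] and ∫₀^∞ φ(t) dt/t = 1. Define λ̃(x,y) = ∫₀^∞ μ(B(y,r)) φ(ρ(x,y)/r) dr/r for x, y ∈ X. Then there is a constant C < ∞, depending only on φ and the doubling constant, such that for all x, x', y ∈ X with ρ(x,y) > 0 and ρ(x,x') ≤ ρ(x,y)/2, one has |λ̃(x,y)^{-1} − λ̃(x',y)^{-1}| ≤ C (ρ(x,x')/ρ(x,y)) λ̃(x,y)^{-1}. -/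
open MeasureTheory Metric Set
open scoped ENNReal NNReal

/-- The regularized kernel `λ̃(x,y) = ∫₀^∞ μ(B(y,r)) φ(ρ(x,y)/r) dr/r`. -/
noncomputable def lamTilde {X : Type*} [MetricSpace X] [MeasurableSpace X]
    (μ : Measure X) (φ : ℝ → ℝ) (x y : X) : ℝ≥0∞ :=
  ∫⁻ r in Set.Ioi (0 : ℝ), μ (ball y r) * ENNReal.ofReal (φ (dist x y / r) / r)

/-- Substitution `t = d/r` leaves the measure `dt/t` on `(0,∞)` invariant. -/
lemma lamAux_subst (ψ : ℝ → ℝ) (hψnn : ∀ t, 0 ≤ ψ t)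
    (hψint : ∫ t in Set.Ioi (0 : ℝ), ψ t / t = 1) (d : ℝ) (hd : 0 < d) :
    ∫⁻ r in Set.Ioi (0 : ℝ), ENNReal.ofReal (ψ (d / r) / r) = 1 := by
  have hinteg : IntegrableOn (fun t => ψ t / t) (Set.Ioi (0 : ℝ)) := by
    by_contra h
    rw [MeasureTheory.integral_undef h] at hψint
    norm_num at hψint
  set f : ℝ → ℝ := fun r => d / r with hf
  set f' : ℝ → ℝ := fun r => -(d / r ^ 2) with hf'
  have hderiv : ∀ r ∈ Set.Ioi (0 : ℝ), HasDerivWithinAt f (f' r) (Set.Ioi 0) r := by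
    intro r hr
    have hr0 : r ≠ 0 := ne_of_gt hr
    have h1 : HasDerivAt (fun x : ℝ => d * x⁻¹) (d * (-(r ^ 2)⁻¹)) r :=
      (hasDerivAt_inv hr0).const_mul d
    have h2 : HasDerivAt f (f' r) r := by
      convert h1 using 1
      · exact hf
      · simp only [hf']; field_simp
    exact h2.hasDerivWithinAt
  have hinj : Set.InjOn f (Set.Ioi 0) := by
    intro a ha b hb h
    have ha0 : a ≠ 0 := ne_of_gt ha
    have hb0 : b ≠ 0 := ne_of_gt hb
    have : a⁻¹ = b⁻¹ := by
      have h' : d * a⁻¹ = d * b⁻¹ := by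
        simpa [hf, div_eq_mul_inv] using h
      exact mul_left_cancel₀ (ne_of_gt hd) h'
    exact inv_injective this
  have himg : f '' Set.Ioi 0 = Set.Ioi (0 : ℝ) := by
    ext t
    constructor
    · rintro ⟨r, hr, rfl⟩
      exact div_pos hd hr
    · intro ht
      refine ⟨d / t, div_pos hd ht, ?_⟩
      show d / (d / t) = t
      rw [div_div_eq_mul_div, mul_comm, mul_div_assoc, div_self (ne_of_gt hd), mul_one]
  have hsim : Set.EqOn (fun r => |f' r| • (ψ (f r) / f r)) (fun r => ψ (d / r) / r)
      (Set.Ioi 0) := by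
    intro r hr
    have hr0 : (0:ℝ) < r := hr
    have habs : |f' r| = d / r ^ 2 := by
      rw [hf']
      simp only [abs_neg]
      exact abs_of_nonneg (by positivity)
    simp only [habs, smul_eq_mul, hf]
    field_simp
  have himg_int : IntegrableOn (fun r => |f' r| • (ψ (f r) / f r)) (Set.Ioi 0) := by
    have h := (integrableOn_image_iff_integrableOn_abs_deriv_smul measurableSet_Ioi hderiv hinj
      (fun t => ψ t / t)).1
    rw [himg] at h
    exact h hinteg
  have hint2 : IntegrableOn (fun r => ψ (d / r) / r) (Set.Ioi 0) :=
    himg_int.congr_fun hsim measurableSet_Ioi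
  have heq2 : ∫ r in Set.Ioi (0:ℝ), ψ (d / r) / r = 1 := by
    rw [← setIntegral_congr_fun measurableSet_Ioi hsim]
    have h := integral_image_eq_integral_abs_deriv_smul measurableSet_Ioi hderiv hinj
      (fun t => ψ t / t)
    rw [himg] at h
    rw [← h]; exact hψint
  have hnn : (0 : ℝ → ℝ) ≤ᵐ[volume.restrict (Set.Ioi 0)] fun r => ψ (d / r) / r :=
    (ae_restrict_iff' measurableSet_Ioi).2 (Filter.Eventually.of_forall fun r hr =>
      div_nonneg (hψnn _) (le_of_lt hr))
  rw [← ofReal_integral_eq_lintegral_ofReal hint2 hnn, heq2, ENNReal.ofReal_one]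

/-- Tail integral `∫_a^∞ c/r² dr = c/a`. -/
lemma lamAux_tail (c a : ℝ) (hc : 0 ≤ c) (ha : 0 < a) :
    ∫⁻ r in Set.Ioi a, ENNReal.ofReal (c / r ^ 2) = ENNReal.ofReal (c / a) := by
  have hcong : Set.EqOn (fun r : ℝ => c • r ^ (-2 : ℝ)) (fun r : ℝ => c / r ^ 2)
      (Set.Ioi a) := by
    intro r hr
    have hr0 : (0:ℝ) < r := ha.trans hr
    simp only [smul_eq_mul]
    rw [Real.rpow_neg hr0.le, show ((2:ℝ) = ((2:ℕ):ℝ)) by norm_num, Real.rpow_natCast]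
    norm_num [div_eq_mul_inv]
  have hint0 : IntegrableOn (fun r : ℝ => c • r ^ (-2 : ℝ)) (Set.Ioi a) :=
    (integrableOn_Ioi_rpow_of_lt (by norm_num) ha).smul c
  have hint : IntegrableOn (fun r : ℝ => c / r ^ 2) (Set.Ioi a) :=
    hint0.congr_fun hcong measurableSet_Ioi
  have hval : ∫ r in Set.Ioi a, c / r ^ 2 = c / a := by
    rw [← setIntegral_congr_fun measurableSet_Ioi hcong, integral_smul,
      integral_Ioi_rpow_of_lt (by norm_num) ha]
    rw [smul_eq_mul]
    norm_num
    rw [Real.rpow_neg_one]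
    field_simp
  have hnn : (0 : ℝ → ℝ) ≤ᵐ[volume.restrict (Set.Ioi a)] fun r : ℝ => c / r ^ 2 :=
    Filter.Eventually.of_forall fun r => div_nonneg hc (sq_nonneg r)
  rw [← ofReal_integral_eq_lintegral_ofReal hint hnn, hval]

/-- for `φ ∈ C¹([0,∞))`, `φ ≥ 0`, `supp φ ⊂ [1,4]`, `∫₀^∞ φ(t) dt/t = 1`,
the kernel `λ̃⁻¹` satisfies a Lipschitz regularity estimate in the first variable:
`|λ̃(x,y)⁻¹ − λ̃(x',y)⁻¹| ≤ C (ρ(x,x')/ρ(x,y)) λ̃(x,y)⁻¹` whenever `ρ(x,x') ≤ ρ(x,y)/2`. -/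
theorem lamTilde_lipschitz_regularity
    {X : Type*} [MetricSpace X] [MeasurableSpace X] [BorelSpace X]
    (μ : Measure X) (C_D : ℝ≥0) (hμ : IsDoubling μ C_D)
    (φ : ℝ → ℝ) (hφreg : ContDiffOn ℝ 1 φ (Set.Ici 0))
    (hφpos : ∀ t ∈ Set.Ici (0 : ℝ), 0 ≤ φ t)
    (hφsupp : Function.support φ ∩ Set.Ici 0 ⊆ Set.Icc 1 4)
    (hφint : ∫ t in Set.Ioi (0 : ℝ), φ t / t = 1) :
    ∃ C : ℝ, 0 ≤ C ∧ ∀ x x' y : X, 0 < dist x y → dist x x' ≤ dist x y / 2 →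
      |(lamTilde μ φ x y).toReal⁻¹ - (lamTilde μ φ x' y).toReal⁻¹| ≤
        C * (dist x x' / dist x y) * (lamTilde μ φ x y).toReal⁻¹ := by
  classical
  set ψ : ℝ → ℝ := fun t => φ (max t 0) with hψdef
  have hψnn : ∀ t, 0 ≤ ψ t := fun t => hφpos _ (Set.mem_Ici.2 (le_max_right _ _))
  have hψeq : ∀ t : ℝ, 0 ≤ t → ψ t = φ t := fun t ht => by
    simp only [hψdef, max_eq_left ht]
  have hψzero : ∀ t : ℝ, (t < 1 ∨ 4 < t) → ψ t = 0 := by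
    intro t ht
    by_contra h
    have hmem : max t 0 ∈ Function.support φ ∩ Set.Ici 0 :=
      ⟨fun h0 => h h0, Set.mem_Ici.2 (le_max_right _ _)⟩
    have hc := hφsupp hmem
    rcases ht with ht | ht
    · have : max t 0 < 1 := max_lt ht one_pos
      linarith [hc.1]
    · have := le_max_left t 0
      linarith [hc.2]
  have hψint : ∫ t in Set.Ioi (0:ℝ), ψ t / t = 1 := by
    have hEq : Set.EqOn (fun t : ℝ => ψ t / t) (fun t : ℝ => φ t / t) (Set.Ioi 0) := by
      intro t ht
      simp only [hψeq t (le_of_lt ht)]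
    rw [setIntegral_congr_fun measurableSet_Ioi hEq]
    exact hφint
  -- Lipschitz constant for φ (hence ψ) on [0, 24]
  obtain ⟨K, hK0, hKlip⟩ : ∃ K : ℝ, 0 ≤ K ∧ ∀ a b : ℝ, a ∈ Set.Icc (0:ℝ) 24 →
      b ∈ Set.Icc (0:ℝ) 24 → |ψ a - ψ b| ≤ K * |a - b| := by
    have hsub : Set.Icc (0:ℝ) 24 ⊆ Set.Ici 0 := fun x hx => hx.1
    have hcd : ContDiffOn ℝ 1 φ (Set.Icc (0:ℝ) 24) := hφreg.mono hsub
    have hdiff : DifferentiableOn ℝ φ (Set.Icc (0:ℝ) 24) := hcd.differentiableOn one_ne_zero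
    have hud : UniqueDiffOn ℝ (Set.Icc (0:ℝ) 24) := uniqueDiffOn_Icc (by norm_num)
    have hcont' : ContinuousOn (derivWithin φ (Set.Icc (0:ℝ) 24)) (Set.Icc 0 24) :=
      hcd.continuousOn_derivWithin hud le_rfl
    obtain ⟨K0, hK0b⟩ := isCompact_Icc.exists_bound_of_continuousOn hcont'
    refine ⟨max K0 0, le_max_right _ _, fun a b ha hb => ?_⟩
    have h : ‖φ a - φ b‖ ≤ (max K0 0) * ‖a - b‖ :=
      Convex.norm_image_sub_le_of_norm_derivWithin_le hdiff
        (fun x hx => (hK0b x hx).trans (le_max_left _ _)) (convex_Icc _ _) hb ha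
    rw [hψeq a ha.1, hψeq b hb.1]
    simpa [Real.norm_eq_abs] using h
  refine ⟨16 * K * (C_D : ℝ) ^ 4,
    mul_nonneg (mul_nonneg (by norm_num) hK0) (by positivity), fun x x' y hd hxx' => ?_⟩
  set d := dist x y with hdd
  set d' := dist x' y with hdd'
  set δ := dist x x' with hδdef
  have hδ0 : 0 ≤ δ := dist_nonneg
  have habs : |d - d'| ≤ δ := abs_dist_sub_le x x' y
  have h1 := abs_le.1 habs
  have hd'lb : d / 2 ≤ d' := by linarith [h1.2]
  have hd'ub : d' ≤ 3 * d / 2 := by linarith [h1.1]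
  have hd'0 : 0 < d' := lt_of_lt_of_le (by linarith) hd'lb
  set L : ℝ → ℝ≥0∞ := fun s => ∫⁻ r in Set.Ioi (0:ℝ),
    μ (ball y r) * ENNReal.ofReal (ψ (s / r) / r) with hLdef
  have hLx : lamTilde μ φ x y = L d := by
    refine setLIntegral_congr_fun measurableSet_Ioi (fun r hr => ?_)
    have hr' : (0:ℝ) < r := hr
    rw [hψeq _ (div_nonneg hd.le hr'.le)]
  have hLx' : lamTilde μ φ x' y = L d' := by
    refine setLIntegral_congr_fun measurableSet_Ioi (fun r hr => ?_)
    have hr' : (0:ℝ) < r := hr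
    rw [hψeq _ (div_nonneg hd'0.le hr'.le)]
  rw [hLx, hLx']
  -- doubling helpers
  have hdb : ∀ r : ℝ, 0 < r → μ (ball y (2 * r)) ≤ (C_D : ℝ≥0∞) * μ (ball y r) :=
    fun r hr => (hμ y r hr).2.1
  have hfin : ∀ r : ℝ, 0 < r → μ (ball y r) ≠ ⊤ := fun r hr => (hμ y r hr).2.2.ne
  have hpos : ∀ r : ℝ, 0 < r → 0 < μ (ball y r) := by
    intro r hr
    have h := (hμ y (r/2) (by linarith)).1
    rwa [show 2 * (r/2) = r by ring] at h
  -- upper bound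
  have hupper : ∀ s : ℝ, 0 < s → L s ≤ μ (ball y s) := by
    intro s hs
    have hpt : ∀ r ∈ Set.Ioi (0:ℝ),
        μ (ball y r) * ENNReal.ofReal (ψ (s / r) / r) ≤
          μ (ball y s) * ENNReal.ofReal (ψ (s / r) / r) := by
      intro r hr
      have hr' : (0:ℝ) < r := hr
      by_cases hz : ψ (s / r) = 0
      · simp [hz]
      · have h1' : 1 ≤ s / r := by
          by_contra hcc
          exact hz (hψzero _ (Or.inl (lt_of_not_ge hcc)))
        have hrs : r ≤ s := by
          have h2 := mul_le_mul_of_nonneg_right h1' hr'.le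
          rwa [one_mul, div_mul_cancel₀ _ hr'.ne'] at h2
        exact mul_le_mul_left (measure_mono (ball_subset_ball hrs)) _
    have step1 : L s ≤ ∫⁻ r in Set.Ioi (0:ℝ),
        μ (ball y s) * ENNReal.ofReal (ψ (s / r) / r) :=
      lintegral_mono_ae ((ae_restrict_iff' measurableSet_Ioi).2
        (Filter.Eventually.of_forall hpt))
    have step2 : ∫⁻ r in Set.Ioi (0:ℝ), μ (ball y s) * ENNReal.ofReal (ψ (s / r) / r)
        = μ (ball y s) * ∫⁻ r in Set.Ioi (0:ℝ), ENNReal.ofReal (ψ (s / r) / r) :=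
      lintegral_const_mul' _ _ (hfin s hs)
    refine step1.trans (le_of_eq ?_)
    rw [step2, lamAux_subst ψ hψnn hψint s hs, mul_one]
  -- lower bound
  have hlower : ∀ s : ℝ, 0 < s → μ (ball y (s / 4)) ≤ L s := by
    intro s hs
    have hpt : ∀ r ∈ Set.Ioi (0:ℝ),
        μ (ball y (s / 4)) * ENNReal.ofReal (ψ (s / r) / r) ≤
          μ (ball y r) * ENNReal.ofReal (ψ (s / r) / r) := by
      intro r hr
      have hr' : (0:ℝ) < r := hr
      by_cases hz : ψ (s / r) = 0
      · simp [hz]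
      · have h4 : s / r ≤ 4 := by
          by_contra hcc
          exact hz (hψzero _ (Or.inr (lt_of_not_ge hcc)))
        have hrs : s / 4 ≤ r := by
          rw [div_le_iff₀ hr'] at h4
          linarith
        exact mul_le_mul_left (measure_mono (ball_subset_ball hrs)) _
    have step2 : ∫⁻ r in Set.Ioi (0:ℝ), μ (ball y (s / 4)) * ENNReal.ofReal (ψ (s / r) / r)
        = μ (ball y (s / 4)) * ∫⁻ r in Set.Ioi (0:ℝ), ENNReal.ofReal (ψ (s / r) / r) :=
      lintegral_const_mul' _ _ (hfin _ (by linarith))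
    have step3 : μ (ball y (s / 4)) =
        ∫⁻ r in Set.Ioi (0:ℝ), μ (ball y (s / 4)) * ENNReal.ofReal (ψ (s / r) / r) := by
      rw [step2, lamAux_subst ψ hψnn hψint s hs, mul_one]
    rw [step3]
    exact lintegral_mono_ae ((ae_restrict_iff' measurableSet_Ioi).2
      (Filter.Eventually.of_forall hpt))
  -- the error term
  set E : ℝ≥0∞ := μ (ball y (2 * d)) * ENNReal.ofReal (K * δ / (d / 16)) with hEdef
  set ind : ℝ → ℝ≥0∞ := fun r => (Set.Ioc (d/16) (2*d)).indicator
    (fun r => μ (ball y (2*d)) * ENNReal.ofReal (K * δ / r ^ 2)) r with hinddef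
  have hindmeas : Measurable ind := by
    apply Measurable.indicator _ measurableSet_Ioc
    exact measurable_const.mul (ENNReal.measurable_ofReal.comp
      (measurable_const.div (measurable_id.pow_const 2)))
  have hindint : ∫⁻ r in Set.Ioi (0:ℝ), ind r ≤ E := by
    calc ∫⁻ r in Set.Ioi (0:ℝ), ind r
        = ∫⁻ r in Set.Ioc (d/16) (2*d),
            μ (ball y (2*d)) * ENNReal.ofReal (K * δ / r ^ 2) := by
          rw [hinddef]
          have hss : Set.Ioc (d/16) (2*d) ∩ Set.Ioi (0:ℝ) = Set.Ioc (d/16) (2*d) :=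
            Set.inter_eq_self_of_subset_left
              (fun r hr => lt_trans (by linarith : (0:ℝ) < d/16) hr.1)
          rw [lintegral_indicator measurableSet_Ioc,
            Measure.restrict_restrict measurableSet_Ioc, hss]
      _ = μ (ball y (2*d)) * ∫⁻ r in Set.Ioc (d/16) (2*d), ENNReal.ofReal (K * δ / r ^ 2) :=
          lintegral_const_mul' _ _ (hfin _ (by linarith))
      _ ≤ μ (ball y (2*d)) * ∫⁻ r in Set.Ioi (d/16), ENNReal.ofReal (K * δ / r ^ 2) :=
          mul_le_mul_right (lintegral_mono_set Set.Ioc_subset_Ioi_self) _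
      _ = E := by
          rw [lamAux_tail _ _ (mul_nonneg hK0 hδ0) (by linarith)]
  -- key comparison
  have key : ∀ s t : ℝ, d/2 ≤ s → s ≤ 3*d/2 → d/2 ≤ t → t ≤ 3*d/2 →
      |s - t| ≤ δ → L s ≤ L t + E := by
    intro s t hs1 hs2 ht1 ht2 hst
    have hpt : ∀ r ∈ Set.Ioi (0:ℝ),
        μ (ball y r) * ENNReal.ofReal (ψ (s / r) / r) ≤
          μ (ball y r) * ENNReal.ofReal (ψ (t / r) / r) + ind r := by
      intro r hr
      have hr' : (0:ℝ) < r := hr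
      by_cases hmem : r ∈ Set.Ioc (d/16) (2*d)
      · obtain ⟨hrl, hru⟩ := hmem
        have hsr : s / r ∈ Set.Icc (0:ℝ) 24 := ⟨div_nonneg (by linarith) hr'.le, by
          rw [div_le_iff₀ hr']; nlinarith⟩
        have htr : t / r ∈ Set.Icc (0:ℝ) 24 := ⟨div_nonneg (by linarith) hr'.le, by
          rw [div_le_iff₀ hr']; nlinarith⟩
        have hlip := hKlip _ _ hsr htr
        have hdiffabs : |s / r - t / r| = |s - t| / r := by
          rw [div_sub_div_same, abs_div, abs_of_pos hr']
        rw [hdiffabs] at hlip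
        have h2 : ψ (s / r) ≤ ψ (t / r) + K * δ / r := by
          have h3 : K * (|s - t| / r) ≤ K * (δ / r) :=
            mul_le_mul_of_nonneg_left ((div_le_div_iff_of_pos_right hr').2 hst) hK0
          have h4 := (le_abs_self (ψ (s / r) - ψ (t / r))).trans (hlip.trans h3)
          have h4' : K * (δ / r) = K * δ / r := (mul_div_assoc K δ r).symm
          linarith
        have h5 : ψ (s / r) / r ≤ ψ (t / r) / r + K * δ / r ^ 2 := by
          have h6 : ψ (s / r) / r ≤ (ψ (t / r) + K * δ / r) / r :=
            (div_le_div_iff_of_pos_right hr').2 h2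
          rw [add_div, div_div, ← pow_two r] at h6
          exact h6
        calc μ (ball y r) * ENNReal.ofReal (ψ (s / r) / r)
            ≤ μ (ball y r) * (ENNReal.ofReal (ψ (t / r) / r) +
              ENNReal.ofReal (K * δ / r ^ 2)) :=
              mul_le_mul_right ((ENNReal.ofReal_le_ofReal h5).trans
                ENNReal.ofReal_add_le) _
          _ = μ (ball y r) * ENNReal.ofReal (ψ (t / r) / r) +
              μ (ball y r) * ENNReal.ofReal (K * δ / r ^ 2) := by rw [mul_add]
          _ ≤ μ (ball y r) * ENNReal.ofReal (ψ (t / r) / r) + ind r := by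
              have hmem2 : r ∈ Set.Ioc (d/16) (2*d) := ⟨hrl, hru⟩
              have hindr : ind r = μ (ball y (2*d)) * ENNReal.ofReal (K * δ / r ^ 2) := by
                rw [hinddef]
                exact Set.indicator_of_mem hmem2 _
              rw [hindr]
              exact add_le_add_right
                (mul_le_mul_left (measure_mono (ball_subset_ball hru)) _) _
      · have hz : ψ (s / r) = 0 := by
          simp only [Set.mem_Ioc, not_and_or, not_lt, not_le] at hmem
          rcases hmem with hc | hc
          · refine hψzero _ (Or.inr ?_)
            rw [lt_div_iff₀ hr']
            nlinarith
          · refine hψzero _ (Or.inl ?_)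
            rw [div_lt_one hr']
            linarith
        simp only [hz, zero_div, ENNReal.ofReal_zero, mul_zero]
        exact zero_le
    calc L s ≤ ∫⁻ r in Set.Ioi (0:ℝ),
          (μ (ball y r) * ENNReal.ofReal (ψ (t / r) / r) + ind r) :=
        lintegral_mono_ae ((ae_restrict_iff' measurableSet_Ioi).2
          (Filter.Eventually.of_forall hpt))
      _ = L t + ∫⁻ r in Set.Ioi (0:ℝ), ind r := lintegral_add_right _ hindmeas
      _ ≤ L t + E := add_le_add_right hindint _
  -- collect facts
  have hLd_ne : L d ≠ ⊤ := (lt_of_le_of_lt (hupper d hd) (hμ y d hd).2.2).ne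
  have hLd'_ne : L d' ≠ ⊤ := (lt_of_le_of_lt (hupper d' hd'0) (hμ y d' hd'0).2.2).ne
  have hLd_pos : 0 < L d := lt_of_lt_of_le (hpos _ (by linarith)) (hlower d hd)
  have hLd'_pos : 0 < L d' := lt_of_lt_of_le (hpos _ (by linarith)) (hlower d' hd'0)
  have hE_ne : E ≠ ⊤ := ENNReal.mul_ne_top (hfin _ (by linarith)) ENNReal.ofReal_ne_top
  have hF5 : L d ≤ L d' + E := key d d' (by linarith) (by linarith) hd'lb hd'ub habs
  have hF6 : L d' ≤ L d + E := key d' d hd'lb hd'ub (by linarith) (by linarith)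
    (by rwa [abs_sub_comm])
  have hchain : μ (ball y (2 * d)) ≤ (C_D : ℝ≥0∞) ^ 4 * L d' := by
    have c2 : μ (ball y d) ≤ (C_D : ℝ≥0∞) * μ (ball y (d / 2)) := by
      have h := hdb (d/2) (by linarith)
      rwa [show 2 * (d/2) = d by ring] at h
    have c3 : μ (ball y (d/2)) ≤ (C_D : ℝ≥0∞) * μ (ball y (d / 4)) := by
      have h := hdb (d/4) (by linarith)
      rwa [show 2 * (d/4) = d/2 by ring] at h
    have c4 : μ (ball y (d/4)) ≤ (C_D : ℝ≥0∞) * μ (ball y (d / 8)) := by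
      have h := hdb (d/8) (by linarith)
      rwa [show 2 * (d/8) = d/4 by ring] at h
    have c5 : μ (ball y (d/8)) ≤ L d' := by
      refine le_trans (measure_mono (ball_subset_ball (by linarith : d/8 ≤ d'/4))) ?_
      exact hlower d' hd'0
    calc μ (ball y (2*d)) ≤ (C_D : ℝ≥0∞) * μ (ball y d) := hdb d hd
      _ ≤ (C_D : ℝ≥0∞) * ((C_D : ℝ≥0∞) * μ (ball y (d/2))) := mul_le_mul_right c2 _
      _ ≤ (C_D : ℝ≥0∞) * ((C_D : ℝ≥0∞) * ((C_D : ℝ≥0∞) * μ (ball y (d/4)))) := by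
          gcongr
      _ ≤ (C_D : ℝ≥0∞) * ((C_D : ℝ≥0∞) * ((C_D : ℝ≥0∞) * ((C_D : ℝ≥0∞) * L d'))) := by
          gcongr
          exact le_trans c4 (mul_le_mul_right c5 _)
      _ = (C_D : ℝ≥0∞) ^ 4 * L d' := by ring
  set A := (L d).toReal with hA
  set B := (L d').toReal with hB
  have hA_pos : 0 < A := ENNReal.toReal_pos hLd_pos.ne' hLd_ne
  have hB_pos : 0 < B := ENNReal.toReal_pos hLd'_pos.ne' hLd'_ne
  have he_ab : |A - B| ≤ E.toReal := by
    have h5 : A ≤ B + E.toReal := by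
      have h := ENNReal.toReal_mono (ENNReal.add_ne_top.2 ⟨hLd'_ne, hE_ne⟩) hF5
      rwa [ENNReal.toReal_add hLd'_ne hE_ne] at h
    have h6 : B ≤ A + E.toReal := by
      have h := ENNReal.toReal_mono (ENNReal.add_ne_top.2 ⟨hLd_ne, hE_ne⟩) hF6
      rwa [ENNReal.toReal_add hLd_ne hE_ne] at h
    rw [abs_sub_le_iff]
    exact ⟨by linarith, by linarith⟩
  have hE_le : E.toReal ≤ 16 * K * (C_D : ℝ) ^ 4 * (δ / d) * B := by
    have h7 : E ≤ (C_D : ℝ≥0∞) ^ 4 * L d' * ENNReal.ofReal (K * δ / (d / 16)) :=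
      mul_le_mul_left hchain _
    have hne : (C_D : ℝ≥0∞) ^ 4 * L d' * ENNReal.ofReal (K * δ / (d / 16)) ≠ ⊤ :=
      ENNReal.mul_ne_top (ENNReal.mul_ne_top
        (ENNReal.pow_ne_top ENNReal.coe_ne_top) hLd'_ne) ENNReal.ofReal_ne_top
    have h8 := ENNReal.toReal_mono hne h7
    have hq : (0:ℝ) ≤ K * δ / (d / 16) := div_nonneg (mul_nonneg hK0 hδ0) (by linarith)
    simp only [ENNReal.toReal_mul, ENNReal.toReal_pow, ENNReal.coe_toReal,
      ENNReal.toReal_ofReal hq] at h8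
    calc E.toReal ≤ (C_D : ℝ) ^ 4 * B * (K * δ / (d / 16)) := h8
      _ = 16 * K * (C_D : ℝ) ^ 4 * (δ / d) * B := by
          field_simp
  have hnum : |B - A| ≤ 16 * K * (C_D : ℝ) ^ 4 * (δ / d) * B := by
    rw [abs_sub_comm]
    exact le_trans he_ab hE_le
  rw [inv_sub_inv hA_pos.ne' hB_pos.ne', abs_div,
    abs_of_pos (mul_pos hA_pos hB_pos)]
  calc |B - A| / (A * B) ≤ (16 * K * (C_D:ℝ)^4 * (δ/d) * B) / (A * B) := by
        exact (div_le_div_iff_of_pos_right (mul_pos hA_pos hB_pos)).2 hnum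
    _ = 16 * K * (C_D:ℝ)^4 * (δ/d) * A⁻¹ := by
        field_simp
end

section
/- Let a, b, c be three non-collinear points of the Euclidean plane ℝ², and let X = [a,b] ∪ [b,c] ∪ [c,a] be the union of the three closed segments (the edges of the triangle), equipped with the metric induced by the Euclidean distance. Then X does not have the monotone geodesic property (M). -/
open Metric Set

open scoped InnerProductSpace

private lemma collinear_of_eq_add_smul {a b c : EuclideanSpace ℝ (Fin 2)} (r : ℝ)
    (h : a = b + r • (c - b)) :
    Collinear ℝ ({a, b, c} : Set (EuclideanSpace ℝ (Fin 2))) := by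
  have hmem : a ∈ affineSpan ℝ ({b, c} : Set (EuclideanSpace ℝ (Fin 2))) := by
    have h2 := AffineMap.lineMap_mem_affineSpan_pair r b c
    rwa [AffineMap.lineMap_apply_module, show (1 - r) • b + r • c = a by rw [h]; module] at h2
  exact (collinear_insert_iff_of_mem_affineSpan hmem).mpr (collinear_pair ℝ b c)

private lemma inner_sum_pos {x y z : EuclideanSpace ℝ (Fin 2)} (hxy : x ≠ y) :
    0 < ⟪y - x, z - x⟫_ℝ + ⟪x - y, z - y⟫_ℝ := by
  have h1 : ⟪y - x, z - x⟫_ℝ + ⟪x - y, z - y⟫_ℝ = ⟪y - x, y - x⟫_ℝ := by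
    rw [show x - y = -(y - x) by abel, inner_neg_left, ← sub_eq_add_neg, ← inner_sub_right]
    congr 1
    abel
  rw [h1, real_inner_self_eq_norm_sq]
  exact pow_pos (norm_pos_iff.mpr (sub_ne_zero.mpr hxy.symm)) 2

private lemma key (a b c : EuclideanSpace ℝ (Fin 2))
    (h : ¬ Collinear ℝ ({a, b, c} : Set (EuclideanSpace ℝ (Fin 2))))
    (hgb : 0 < ⟪a - b, c - b⟫_ℝ) (hgc : 0 < ⟪a - c, b - c⟫_ℝ) :
    ¬ MonotoneGeodesicProp
        ↥(segment ℝ a b ∪ segment ℝ b c ∪ segment ℝ c a) := by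
  rintro ⟨C, hC⟩
  have hvne : c - b ≠ 0 := by
    intro h0
    rw [h0, inner_zero_right] at hgb
    exact lt_irrefl 0 hgb
  have hvsq : (0:ℝ) < ‖c - b‖ ^ 2 := pow_pos (norm_pos_iff.mpr hvne) 2
  set t : ℝ := ⟪a - b, c - b⟫_ℝ / ‖c - b‖ ^ 2 with ht
  have ht0 : 0 < t := div_pos hgb hvsq
  have ht1 : t < 1 := by
    rw [ht, div_lt_one hvsq]
    have hdiff : ‖c - b‖ ^ 2 - ⟪a - b, c - b⟫_ℝ = ⟪a - c, b - c⟫_ℝ := by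
      rw [← real_inner_self_eq_norm_sq, ← inner_sub_left,
        show c - b - (a - b) = -(a - c) by abel, show c - b = -(b - c) by abel, inner_neg_neg]
    linarith
  set p : EuclideanSpace ℝ (Fin 2) := b + t • (c - b) with hp
  have hpseg : p ∈ segment ℝ b c := by
    rw [segment_eq_image' ℝ b c]
    exact ⟨t, ⟨ht0.le, ht1.le⟩, hp.symm⟩
  have horth : ⟪a - p, c - b⟫_ℝ = 0 := by
    rw [hp, show a - (b + t • (c - b)) = (a - b) - t • (c - b) by abel, inner_sub_left,
      real_inner_smul_left, real_inner_self_eq_norm_sq, ht, div_mul_cancel₀ _ hvsq.ne']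
    ring
  have horth2 : ⟪c - b, p - a⟫_ℝ = 0 := by
    rw [real_inner_comm, show p - a = -(a - p) by abel, inner_neg_left, horth, neg_zero]
  -- every point of [b,c] is at distance ≥ dist p a from a
  have hmin : ∀ z ∈ segment ℝ b c, dist p a ≤ dist z a := by
    intro z hz
    rw [segment_eq_image' ℝ b c] at hz
    obtain ⟨r, hr, rfl⟩ := hz
    have hdecomp : b + r • (c - b) - a = (r - t) • (c - b) + (p - a) := by
      rw [hp]; module
    have hsq : ‖p - a‖ ^ 2 ≤ ‖b + r • (c - b) - a‖ ^ 2 := by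
      rw [hdecomp, norm_add_sq_real, real_inner_smul_left, horth2]
      nlinarith [sq_nonneg ‖(r - t) • (c - b)‖]
    rw [dist_eq_norm, dist_eq_norm]
    exact le_of_pow_le_pow_left₀ two_ne_zero (norm_nonneg _) hsq
  -- a ≠ p
  have hap : a ≠ p := by
    intro he
    exact h (collinear_of_eq_add_smul t (he.trans hp))
  -- p is not on the other two sides
  have hpnab : p ∉ segment ℝ a b := by
    intro hmem
    rw [segment_eq_image' ℝ a b] at hmem
    obtain ⟨s, _, heq⟩ := hmem
    have h2 : a + s • (b - a) = b + t • (c - b) := heq.trans hp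
    have hkey : (1 - s) • (a - b) = t • (c - b) := by
      have h3 : (1 - s) • (a - b) - t • (c - b) = (a + s • (b - a)) - (b + t • (c - b)) := by
        module
      rw [h2, sub_self] at h3
      exact sub_eq_zero.mp h3
    rcases eq_or_ne s 1 with rfl | hs1
    · apply smul_ne_zero ht0.ne' hvne
      rw [← hkey, sub_self, zero_smul]
    · apply h
      apply collinear_of_eq_add_smul ((1 - s)⁻¹ * t)
      have h1s : (1 : ℝ) - s ≠ 0 := sub_ne_zero.mpr (Ne.symm hs1)
      have h4 := congrArg (fun w : EuclideanSpace ℝ (Fin 2) => (1 - s)⁻¹ • w) hkey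
      simp only [smul_smul, inv_mul_cancel₀ h1s, one_smul] at h4
      rw [sub_eq_iff_eq_add'] at h4
      exact h4
  have hpnca : p ∉ segment ℝ c a := by
    intro hmem
    rw [segment_eq_image' ℝ c a] at hmem
    obtain ⟨s, _, heq⟩ := hmem
    have h2 : c + s • (a - c) = b + t • (c - b) := heq.trans hp
    have hkey : s • (a - c) = (t - 1) • (c - b) := by
      have h3 : s • (a - c) - (t - 1) • (c - b) = (c + s • (a - c)) - (b + t • (c - b)) := by
        module
      rw [h2, sub_self] at h3
      exact sub_eq_zero.mp h3
    rcases eq_or_ne s 0 with rfl | hs0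
    · apply smul_ne_zero (sub_ne_zero.mpr ht1.ne) hvne
      rw [← hkey, zero_smul]
    · apply h
      apply collinear_of_eq_add_smul (1 + s⁻¹ * (t - 1))
      have h4 := congrArg (fun w : EuclideanSpace ℝ (Fin 2) => s⁻¹ • w) hkey
      simp only [smul_smul, inv_mul_cancel₀ hs0, one_smul] at h4
      rw [sub_eq_iff_eq_add'] at h4
      rw [h4]
      module
  -- the far set K
  have hcompab : IsCompact (segment ℝ a b) := by
    rw [segment_eq_image' ℝ a b]; exact isCompact_Icc.image (by fun_prop)
  have hcompca : IsCompact (segment ℝ c a) := by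
    rw [segment_eq_image' ℝ c a]; exact isCompact_Icc.image (by fun_prop)
  set K : Set (EuclideanSpace ℝ (Fin 2)) := segment ℝ a b ∪ segment ℝ c a with hK
  have hKclosed : IsClosed K := hcompab.isClosed.union hcompca.isClosed
  have hKne : K.Nonempty := ⟨a, Or.inr (right_mem_segment ℝ c a)⟩
  have hpK : p ∉ K := by
    rintro (h1 | h2)
    · exact hpnab h1
    · exact hpnca h2
  have hδ : 0 < infDist p K := (hKclosed.notMem_iff_infDist_pos hKne).mp hpK
  set δ : ℝ := infDist p K with hδdef
  -- memberships in X
  have haX : a ∈ segment ℝ a b ∪ segment ℝ b c ∪ segment ℝ c a :=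
    Set.mem_union_right _ (right_mem_segment ℝ c a)
  have hpX : p ∈ segment ℝ a b ∪ segment ℝ b c ∪ segment ℝ c a :=
    Set.mem_union_left _ (Set.mem_union_right _ hpseg)
  have hd : 0 < dist a p := dist_pos.mpr hap
  set C' : ℝ := max C 1 with hC'
  have hC'pos : (0:ℝ) < C' := lt_of_lt_of_le one_pos (le_max_right C 1)
  set u : ℝ := min (dist a p) (δ / (2 * C')) with hu
  have hupos : 0 < u := lt_min hd (div_pos hδ (by positivity))
  obtain ⟨z, hz1, hz2⟩ := hC u hupos ⟨a, haX⟩ ⟨p, hpX⟩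
    (by rw [Subtype.dist_eq]; exact min_le_left _ _)
  simp only [Subtype.dist_eq] at hz1 hz2
  -- z is close to p, hence not in K, hence on [b,c]
  have hzp : dist (z : EuclideanSpace ℝ (Fin 2)) p < δ := by
    have h1 : C * u ≤ C' * u := mul_le_mul_of_nonneg_right (le_max_left C 1) hupos.le
    have h2 : C' * u ≤ C' * (δ / (2 * C')) :=
      mul_le_mul_of_nonneg_left (min_le_right _ _) hC'pos.le
    have h3 : C' * (δ / (2 * C')) = δ / 2 := by
      field_simp
    have : dist (z : EuclideanSpace ℝ (Fin 2)) p ≤ δ / 2 := by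
      calc dist (z : EuclideanSpace ℝ (Fin 2)) p ≤ C * u := hz1
        _ ≤ C' * u := h1
        _ ≤ C' * (δ / (2 * C')) := h2
        _ = δ / 2 := h3
    linarith
  have hzK : (z : EuclideanSpace ℝ (Fin 2)) ∉ K := by
    intro hmem
    have := infDist_le_dist_of_mem (x := p) hmem
    rw [dist_comm] at this
    linarith
  have hzbc : (z : EuclideanSpace ℝ (Fin 2)) ∈ segment ℝ b c := by
    rcases z.property with (h1 | h1) | h1
    · exact absurd (Or.inl h1) hzK
    · exact h1
    · exact absurd (Or.inr h1) hzK
  have hfinal : dist p a ≤ dist (z : EuclideanSpace ℝ (Fin 2)) a := hmin _ hzbc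
  rw [dist_comm p a] at hz2 hfinal
  linarith

/-- the union of the three edges of a (non-degenerate) triangle of the
Euclidean plane, with the induced metric, does not have the monotone geodesic
property (M). -/
theorem triangle_not_monotoneGeodesic
    (a b c : EuclideanSpace ℝ (Fin 2))
    (h : ¬ Collinear ℝ ({a, b, c} : Set (EuclideanSpace ℝ (Fin 2)))) :
    ¬ MonotoneGeodesicProp
        ↥(segment ℝ a b ∪ segment ℝ b c ∪ segment ℝ c a) := by
  have hab : a ≠ b := by
    rintro rfl
    exact h (Collinear.subset (by intro x hx; simp at hx ⊢; tauto) (collinear_pair ℝ a c))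
  have hbc : b ≠ c := by
    rintro rfl
    exact h (Collinear.subset (by intro x hx; simp at hx ⊢; tauto) (collinear_pair ℝ a b))
  have hca : c ≠ a := by
    rintro rfl
    exact h (Collinear.subset (by intro x hx; simp at hx ⊢; tauto) (collinear_pair ℝ c b))
  have s1 := inner_sum_pos (z := c) hab
  have s2 := inner_sum_pos (z := a) hbc
  have s3 := inner_sum_pos (z := b) (Ne.symm hca)
  by_cases hgb : 0 < ⟪a - b, c - b⟫_ℝ
  · by_cases hgc : 0 < ⟪a - c, b - c⟫_ℝ
    · exact key a b c h hgb hgc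
    · -- angle at a and angle at b acute: use vertex c
      have hga : 0 < ⟪c - a, b - a⟫_ℝ := by
        rw [real_inner_comm]
        rw [real_inner_comm] at s3
        linarith [not_lt.mp hgc]
      have hset : segment ℝ a b ∪ segment ℝ b c ∪ segment ℝ c a
          = segment ℝ c a ∪ segment ℝ a b ∪ segment ℝ b c := by
        rw [Set.union_comm, ← Set.union_assoc]
      have h' : ¬ Collinear ℝ ({c, a, b} : Set (EuclideanSpace ℝ (Fin 2))) := by
        intro hcol
        exact h (Collinear.subset (by intro x hx; simp at hx ⊢; tauto) hcol)
      rw [hset]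
      refine key c a b h' hga ?_
      rw [real_inner_comm]
      exact hgb
  · -- angle at c and angle at a acute: use vertex b
    have hga : 0 < ⟪b - a, c - a⟫_ℝ := by linarith [not_lt.mp hgb]
    have hgc : 0 < ⟪b - c, a - c⟫_ℝ := by
      rw [real_inner_comm] at s2
      linarith [not_lt.mp hgb]
    have hset : segment ℝ a b ∪ segment ℝ b c ∪ segment ℝ c a
        = segment ℝ b c ∪ segment ℝ c a ∪ segment ℝ a b := by
      rw [Set.union_assoc, Set.union_comm]
    have h' : ¬ Collinear ℝ ({b, c, a} : Set (EuclideanSpace ℝ (Fin 2))) := by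
      intro hcol
      exact h (Collinear.subset (by intro x hx; simp at hx ⊢; tauto) hcol)
    rw [hset]
    exact key b c a h' hgc hga
end

section
/- The Tessera curve space (X_T, d, Λ) is Ahlfors–David regular of dimension 1: there exists a constant 0 < C < ∞ such that for every z ∈ X_T and r > 0, C^{-1} r ≤ Λ(X_T ∩ B(z,r)) ≤ C r. In particular (X_T, d, Λ) is a space of homogeneous type. -/
open MeasureTheory Metric Set
open scoped ENNReal NNReal Real

/-- The trace `X = γ([0,∞))` of a curve `γ : [0,∞) → ℂ`. -/
def curveSet (γ : ℝ → ℂ) : Set ℂ := γ '' Set.Ici 0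

/-- The union `B_ε` of the inner and outer layers of width `ε` of the "ball"
`S ∩ B` of the subspace `S`, complements being taken in `S`. -/
def relLayer (S B : Set ℂ) (ε : ℝ) : Set ℂ :=
  {x ∈ S ∩ B | Metric.infDist x (S \ B) ≤ ε} ∪
  {y ∈ S \ B | Metric.infDist y (S ∩ B) ≤ ε}

/- ### Auxiliary chord estimates -/

noncomputable def Complex.abs : AbsoluteValue ℂ ℝ :=
  IsAbsoluteValue.toAbsoluteValue (norm : ℂ → ℝ)

@[simp] lemma Complex.abs_apply (z : ℂ) : Complex.abs z = ‖z‖ := rfl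

lemma Complex.abs_ofReal (r : ℝ) : Complex.abs (r : ℂ) = |r| := by
  simp

lemma Complex.abs_add_mul_I (x y : ℝ) :
    Complex.abs ((x : ℂ) + (y : ℂ) * Complex.I) = Real.sqrt (x ^ 2 + y ^ 2) := by
  rw [Complex.abs_apply, Complex.norm_add_mul_I]

lemma Complex.abs_exp_ofReal_mul_I (x : ℝ) :
    Complex.abs (Complex.exp ((x : ℂ) * Complex.I)) = 1 := by
  rw [Complex.abs_apply, Complex.norm_exp_ofReal_mul_I]

lemma Complex.abs_two : Complex.abs 2 = 2 := by simp

lemma chord_eq (x y : ℝ) :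
    Complex.abs (Complex.exp (Complex.I * x) - Complex.exp (Complex.I * y)) =
      2 * |Real.sin ((x - y) / 2)| := by
  have hx : Complex.I * (x:ℝ) = (x:ℝ) * Complex.I := by ring
  have hy : Complex.I * (y:ℝ) = (y:ℝ) * Complex.I := by ring
  rw [hx, hy, Complex.exp_mul_I, Complex.exp_mul_I]
  have : Complex.cos (x:ℝ) + Complex.sin (x:ℝ) * Complex.I -
      (Complex.cos (y:ℝ) + Complex.sin (y:ℝ) * Complex.I) =
      ((Real.cos x - Real.cos y : ℝ) : ℂ) + ((Real.sin x - Real.sin y : ℝ) : ℂ) * Complex.I := by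
    push_cast [Complex.ofReal_cos, Complex.ofReal_sin]
    ring
  rw [this, Complex.abs_add_mul_I]
  have h1 : Real.cos (x - y) = Real.cos x * Real.cos y + Real.sin x * Real.sin y :=
    Real.cos_sub x y
  have h2 : Real.sin x ^ 2 + Real.cos x ^ 2 = 1 := Real.sin_sq_add_cos_sq x
  have h3 : Real.sin y ^ 2 + Real.cos y ^ 2 = 1 := Real.sin_sq_add_cos_sq y
  have h4 : Real.cos (x - y) = 1 - 2 * Real.sin ((x - y) / 2) ^ 2 := by
    have := Real.cos_two_mul ((x - y) / 2)
    have h5 : Real.sin ((x - y) / 2) ^ 2 + Real.cos ((x - y) / 2) ^ 2 = 1 :=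
      Real.sin_sq_add_cos_sq _
    rw [show 2 * ((x - y) / 2) = x - y by ring] at this
    linarith
  have key : (Real.cos x - Real.cos y) ^ 2 + (Real.sin x - Real.sin y) ^ 2 =
      (2 * Real.sin ((x - y) / 2)) ^ 2 := by nlinarith
  rw [key, Real.sqrt_sq_eq_abs, abs_mul]
  norm_num

lemma chord_le (x y : ℝ) :
    Complex.abs (Complex.exp (Complex.I * x) - Complex.exp (Complex.I * y)) ≤ |x - y| := by
  rw [chord_eq]
  calc 2 * |Real.sin ((x - y) / 2)| ≤ 2 * |(x - y) / 2| := by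
        have := Real.abs_sin_le_abs (x := (x - y) / 2); linarith
    _ = |x - y| := by rw [abs_div, abs_two]; ring

lemma chord_ge {x y : ℝ} (hx : x ∈ Icc 0 π) (hy : y ∈ Icc 0 π) :
    2 / π * |x - y| ≤
      Complex.abs (Complex.exp (Complex.I * x) - Complex.exp (Complex.I * y)) := by
  rw [chord_eq]
  wlog h : y ≤ x generalizing x y
  · rw [abs_sub_comm, show (x - y) / 2 = -((y - x) / 2) by ring, Real.sin_neg, abs_neg]
    exact this hy hx (le_of_not_ge h)
  have hd : 0 ≤ (x - y) / 2 := by linarith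
  have hd' : (x - y) / 2 ≤ π / 2 := by
    have := hx.2; have := hy.1; linarith
  have := Real.mul_le_sin hd hd'
  rw [abs_of_nonneg (by linarith [Real.sin_nonneg_of_nonneg_of_le_pi hd (by linarith [Real.pi_pos] : (x - y)/2 ≤ π)] : (0:ℝ) ≤ Real.sin ((x-y)/2)), abs_of_nonneg (by linarith : (0:ℝ) ≤ x - y)]
  have hpi := Real.pi_pos
  rw [div_mul_eq_mul_div, div_le_iff₀ hpi] at this ⊢
  nlinarith

/- ### The breakpoints of the Tessera curve -/

noncomputable def aT (j : ℕ) : ℝ := -π + (1 + 2 * π) * 2 ^ j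
noncomputable def bT (j : ℕ) : ℝ := -π + (2 + 2 * π) * 2 ^ j

lemma two_pow_pos' (j : ℕ) : (0:ℝ) < 2 ^ j := by positivity

lemma aT_le_bT (j : ℕ) : aT j ≤ bT j := by
  have := two_pow_pos' j; unfold aT bT; nlinarith
lemma bT_le_aT_succ (j : ℕ) : bT j ≤ aT (j + 1) := by
  have := two_pow_pos' j; have hpi := Real.pi_pos
  unfold aT bT; rw [pow_succ]; nlinarith
lemma aT_zero : aT 0 = 1 + π := by unfold aT; ring
lemma one_le_aT (j : ℕ) : 1 ≤ aT j := by
  have h : (1:ℝ) ≤ 2 ^ j := one_le_pow₀ (by norm_num)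
  have hpi := Real.pi_pos; unfold aT; nlinarith
lemma two_pow_le_aT (j : ℕ) : (2:ℝ) ^ j ≤ aT j := by
  have h1 : (1:ℝ) ≤ 2 ^ j := one_le_pow₀ (by norm_num)
  have hpi := Real.pi_pos; unfold aT; nlinarith
lemma bT_sub_aT (j : ℕ) : bT j - aT j = 2 ^ j := by unfold aT bT; ring
lemma aT_succ_sub_bT (j : ℕ) : aT (j + 1) - bT j = π * 2 ^ (j + 1) := by
  unfold aT bT; rw [pow_succ]; ring
lemma bT_le_const_mul (j : ℕ) : bT j ≤ (2 + 2 * π) * 2 ^ j := by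
  have hpi := Real.pi_pos; unfold bT; linarith
lemma aT_le_const_mul (j : ℕ) : aT j ≤ (2 + 2 * π) * 2 ^ j := by
  have := two_pow_pos' j; have hpi := Real.pi_pos; unfold aT; nlinarith

section pieces
variable {γ : ℝ → ℂ}

/- ### Formulas on the pieces -/

lemma seg_formula
    (hseg : ∀ k : ℕ, 1 ≤ k →
      ∀ t ∈ Set.Icc (-π + (1 + 2 * π) * 2 ^ (k - 1)) (-π + (2 + 2 * π) * 2 ^ (k - 1)),
        γ t = (if Even k then 1 else -1) *
          ((2 : ℂ) ^ (k - 1) + ((t : ℂ) - ((-π + (1 + 2 * π) * 2 ^ (k - 1) : ℝ) : ℂ))))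
    (j : ℕ) {t : ℝ} (ht : t ∈ Icc (aT j) (bT j)) :
    γ t = (if Even (j + 1) then 1 else -1) *
      (((2:ℝ) ^ j + (t - aT j) : ℝ) : ℂ) := by
  have h := hseg (j + 1) (Nat.le_add_left 1 j) t (by
    simpa only [Nat.add_sub_cancel, aT, bT] using ht)
  simp only [Nat.add_sub_cancel] at h
  rw [h]; unfold aT; push_cast; ring_nf

lemma seg_abs (hseg : ∀ k : ℕ, 1 ≤ k →
      ∀ t ∈ Set.Icc (-π + (1 + 2 * π) * 2 ^ (k - 1)) (-π + (2 + 2 * π) * 2 ^ (k - 1)),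
        γ t = (if Even k then 1 else -1) *
          ((2 : ℂ) ^ (k - 1) + ((t : ℂ) - ((-π + (1 + 2 * π) * 2 ^ (k - 1) : ℝ) : ℂ))))
    (j : ℕ) {t : ℝ} (ht : t ∈ Icc (aT j) (bT j)) :
    Complex.abs (γ t) = 2 ^ j + (t - aT j) := by
  rw [seg_formula hseg j ht, map_mul, Complex.abs_ofReal,
    abs_of_nonneg (by have := two_pow_pos' j; have := ht.1; linarith :
      (0:ℝ) ≤ 2 ^ j + (t - aT j))]
  split <;> simp

lemma seg_dist (hseg : ∀ k : ℕ, 1 ≤ k →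
      ∀ t ∈ Set.Icc (-π + (1 + 2 * π) * 2 ^ (k - 1)) (-π + (2 + 2 * π) * 2 ^ (k - 1)),
        γ t = (if Even k then 1 else -1) *
          ((2 : ℂ) ^ (k - 1) + ((t : ℂ) - ((-π + (1 + 2 * π) * 2 ^ (k - 1) : ℝ) : ℂ))))
    (j : ℕ) {t t' : ℝ} (ht : t ∈ Icc (aT j) (bT j)) (ht' : t' ∈ Icc (aT j) (bT j)) :
    Complex.abs (γ t - γ t') = |t - t'| := by
  rw [seg_formula hseg j ht, seg_formula hseg j ht', ← mul_sub, map_mul]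
  have : (((2:ℝ) ^ j + (t - aT j) : ℝ) : ℂ) - (((2:ℝ) ^ j + (t' - aT j) : ℝ) : ℂ)
      = ((t - t' : ℝ) : ℂ) := by push_cast; ring
  rw [this, Complex.abs_ofReal]
  split <;> simp

lemma arc_formula
    (harc : ∀ k : ℕ, 1 ≤ k →
      ∀ t ∈ Set.Icc (-π + (2 + 2 * π) * 2 ^ (k - 1)) (-π + (1 + 2 * π) * 2 ^ k),
        γ t = (if Even k then 1 else -1) * (2 : ℂ) ^ k *
          Complex.exp (Complex.I *
            (((t : ℂ) - ((-π + (2 + 2 * π) * 2 ^ (k - 1) : ℝ) : ℂ)) / (2 : ℂ) ^ k)))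
    (j : ℕ) {t : ℝ} (ht : t ∈ Icc (bT j) (aT (j + 1))) :
    γ t = (if Even (j + 1) then 1 else -1) * (2 : ℂ) ^ (j + 1) *
      Complex.exp (Complex.I * (((t - bT j) / 2 ^ (j + 1) : ℝ) : ℂ)) := by
  have h := harc (j + 1) (Nat.le_add_left 1 j) t (by
    simpa only [Nat.add_sub_cancel, aT, bT] using ht)
  simp only [Nat.add_sub_cancel] at h
  rw [h]; congr 1; unfold bT; push_cast; ring

lemma arc_abs (harc : ∀ k : ℕ, 1 ≤ k →
      ∀ t ∈ Set.Icc (-π + (2 + 2 * π) * 2 ^ (k - 1)) (-π + (1 + 2 * π) * 2 ^ k),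
        γ t = (if Even k then 1 else -1) * (2 : ℂ) ^ k *
          Complex.exp (Complex.I *
            (((t : ℂ) - ((-π + (2 + 2 * π) * 2 ^ (k - 1) : ℝ) : ℂ)) / (2 : ℂ) ^ k)))
    (j : ℕ) {t : ℝ} (ht : t ∈ Icc (bT j) (aT (j + 1))) :
    Complex.abs (γ t) = 2 ^ (j + 1) := by
  rw [arc_formula harc j ht, map_mul, map_mul]
  have h1 : Complex.abs (Complex.exp (Complex.I * (((t - bT j) / 2 ^ (j + 1) : ℝ) : ℂ))) = 1 := by
    rw [mul_comm]; exact Complex.abs_exp_ofReal_mul_I _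
  have h2 : Complex.abs ((2:ℂ) ^ (j+1)) = 2 ^ (j+1) := by
    rw [map_pow]; norm_num
  rw [h1, h2]
  split <;> simp

lemma arc_dist
    (harc : ∀ k : ℕ, 1 ≤ k →
      ∀ t ∈ Set.Icc (-π + (2 + 2 * π) * 2 ^ (k - 1)) (-π + (1 + 2 * π) * 2 ^ k),
        γ t = (if Even k then 1 else -1) * (2 : ℂ) ^ k *
          Complex.exp (Complex.I *
            (((t : ℂ) - ((-π + (2 + 2 * π) * 2 ^ (k - 1) : ℝ) : ℂ)) / (2 : ℂ) ^ k)))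
    (j : ℕ) {t t' : ℝ} (ht : t ∈ Icc (bT j) (aT (j + 1))) (ht' : t' ∈ Icc (bT j) (aT (j + 1))) :
    2 / π * |t - t'| ≤ Complex.abs (γ t - γ t') ∧ Complex.abs (γ t - γ t') ≤ |t - t'| := by
  have hpi := Real.pi_pos
  have hpow : (0:ℝ) < 2 ^ (j + 1) := by positivity
  have hlen := aT_succ_sub_bT j
  have hθmem : (t - bT j) / 2 ^ (j + 1) ∈ Icc 0 π := by
    constructor
    · exact div_nonneg (by linarith [ht.1]) hpow.le
    · rw [div_le_iff₀ hpow]; have := ht.2; nlinarith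
  have hθ'mem : (t' - bT j) / 2 ^ (j + 1) ∈ Icc 0 π := by
    constructor
    · exact div_nonneg (by linarith [ht'.1]) hpow.le
    · rw [div_le_iff₀ hpow]; have := ht'.2; nlinarith
  have hdiff : |(t - bT j) / 2 ^ (j + 1) - (t' - bT j) / 2 ^ (j + 1)| = |t - t'| / 2 ^ (j + 1) := by
    rw [show (t - bT j) / 2 ^ (j + 1) - (t' - bT j) / 2 ^ (j + 1) = (t - t') / 2 ^ (j+1) by ring,
      abs_div, abs_of_pos hpow]
  have habs : Complex.abs (γ t - γ t') =
      2 ^ (j + 1) * Complex.abs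
        (Complex.exp (Complex.I * (((t - bT j) / 2 ^ (j + 1) : ℝ) : ℂ)) -
         Complex.exp (Complex.I * (((t' - bT j) / 2 ^ (j + 1) : ℝ) : ℂ))) := by
    rw [arc_formula harc j ht, arc_formula harc j ht', ← mul_sub, map_mul, map_mul, map_pow]
    simp only [Complex.abs_two]
    split <;> simp
  constructor
  · rw [habs]
    have h := chord_ge hθmem hθ'mem
    rw [hdiff] at h
    calc 2 / π * |t - t'| = 2 ^ (j+1) * (2 / π * (|t - t'| / 2 ^ (j+1))) := by
          field_simp
      _ ≤ _ := mul_le_mul_of_nonneg_left h hpow.le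
  · rw [habs]
    have h := chord_le ((t - bT j) / 2 ^ (j + 1)) ((t' - bT j) / 2 ^ (j + 1))
    rw [hdiff] at h
    calc 2 ^ (j+1) * Complex.abs _ ≤ 2 ^ (j+1) * (|t - t'| / 2 ^ (j+1)) :=
          mul_le_mul_of_nonneg_left h hpow.le
      _ = |t - t'| := by field_simp

/- ### Base pieces -/

lemma base_seg_abs (hseg0 : ∀ t ∈ Set.Icc (0 : ℝ) 1, γ t = (t : ℂ))
    {t : ℝ} (ht : t ∈ Icc (0:ℝ) 1) : Complex.abs (γ t) = t := by
  rw [hseg0 t ht, Complex.abs_ofReal, abs_of_nonneg ht.1]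

lemma base_seg_dist (hseg0 : ∀ t ∈ Set.Icc (0 : ℝ) 1, γ t = (t : ℂ))
    {t t' : ℝ} (ht : t ∈ Icc (0:ℝ) 1) (ht' : t' ∈ Icc (0:ℝ) 1) :
    Complex.abs (γ t - γ t') = |t - t'| := by
  rw [hseg0 t ht, hseg0 t' ht', ← Complex.ofReal_sub, Complex.abs_ofReal]

lemma base_arc_formula (harc0 : ∀ t ∈ Set.Icc (1 : ℝ) (1 + π),
      γ t = Complex.exp (Complex.I * ((t : ℂ) - 1)))
    {t : ℝ} (ht : t ∈ Icc (1:ℝ) (1 + π)) :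
    γ t = Complex.exp (Complex.I * ((t - 1 : ℝ) : ℂ)) := by
  rw [harc0 t ht]; congr 1; push_cast; ring

lemma base_arc_abs (harc0 : ∀ t ∈ Set.Icc (1 : ℝ) (1 + π),
      γ t = Complex.exp (Complex.I * ((t : ℂ) - 1)))
    {t : ℝ} (ht : t ∈ Icc (1:ℝ) (1 + π)) : Complex.abs (γ t) = 1 := by
  rw [base_arc_formula harc0 ht, mul_comm]
  exact Complex.abs_exp_ofReal_mul_I _

lemma base_arc_dist (harc0 : ∀ t ∈ Set.Icc (1 : ℝ) (1 + π),
      γ t = Complex.exp (Complex.I * ((t : ℂ) - 1)))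
    {t t' : ℝ} (ht : t ∈ Icc (1:ℝ) (1 + π)) (ht' : t' ∈ Icc (1:ℝ) (1 + π)) :
    2 / π * |t - t'| ≤ Complex.abs (γ t - γ t') ∧ Complex.abs (γ t - γ t') ≤ |t - t'| := by
  rw [base_arc_formula harc0 ht, base_arc_formula harc0 ht']
  have h1 : t - 1 ∈ Icc 0 π := ⟨by linarith [ht.1], by linarith [ht.2]⟩
  have h2 : t' - 1 ∈ Icc 0 π := ⟨by linarith [ht'.1], by linarith [ht'.2]⟩
  have he : t - 1 - (t' - 1) = t - t' := by ring
  constructor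
  · have := chord_ge h1 h2; rw [he] at this; exact this
  · have := chord_le (t - 1) (t' - 1); rw [he] at this; exact this

end pieces

/- ### Lipschitz gluing and global estimates -/

def Lip1On (f : ℝ → ℂ) (S : Set ℝ) : Prop :=
  ∀ s ∈ S, ∀ t ∈ S, Complex.abs (f s - f t) ≤ |s - t|

lemma Lip1On.glue {f : ℝ → ℂ} {u v w : ℝ} (huv : u ≤ v) (hvw : v ≤ w)
    (h1 : Lip1On f (Icc u v)) (h2 : Lip1On f (Icc v w)) : Lip1On f (Icc u w) := by
  have key : ∀ s ∈ Icc u w, ∀ t ∈ Icc u w, s ≤ t → Complex.abs (f s - f t) ≤ |s - t| := by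
    intro s hs t ht hst
    rcases le_or_gt t v with h | h
    · exact h1 s ⟨hs.1, hst.trans h⟩ t ⟨ht.1, h⟩
    rcases le_or_gt v s with h' | h'
    · exact h2 s ⟨h', hs.2⟩ t ⟨h'.trans hst, ht.2⟩
    · have hv1 : v ∈ Icc u v := ⟨huv, le_refl v⟩
      have hv2 : v ∈ Icc v w := ⟨le_refl v, hvw⟩
      have e1 := h1 s ⟨hs.1, h'.le⟩ v hv1
      have e2 := h2 v hv2 t ⟨h.le, ht.2⟩
      calc Complex.abs (f s - f t) ≤ Complex.abs (f s - f v) + Complex.abs (f v - f t) := by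
            have := Complex.abs.sub_le (f s) (f v) (f t); simpa using this
        _ ≤ |s - v| + |v - t| := add_le_add e1 e2
        _ = |s - t| := by
            rw [abs_of_nonpos (by linarith), abs_of_nonpos (by linarith),
              abs_of_nonpos (by linarith)]; ring
  intro s hs t ht
  rcases le_or_gt s t with h | h
  · exact key s hs t ht h
  · rw [show f s - f t = -(f t - f s) by ring, AbsoluteValue.map_neg, abs_sub_comm]
    exact key t ht s hs h.le

section main
variable {γ : ℝ → ℂ}
variable (hseg0 : ∀ t ∈ Set.Icc (0 : ℝ) 1, γ t = (t : ℂ))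
    (harc0 : ∀ t ∈ Set.Icc (1 : ℝ) (1 + π),
      γ t = Complex.exp (Complex.I * ((t : ℂ) - 1)))
    (hseg : ∀ k : ℕ, 1 ≤ k →
      ∀ t ∈ Set.Icc (-π + (1 + 2 * π) * 2 ^ (k - 1)) (-π + (2 + 2 * π) * 2 ^ (k - 1)),
        γ t = (if Even k then 1 else -1) *
          ((2 : ℂ) ^ (k - 1) + ((t : ℂ) - ((-π + (1 + 2 * π) * 2 ^ (k - 1) : ℝ) : ℂ))))
    (harc : ∀ k : ℕ, 1 ≤ k →
      ∀ t ∈ Set.Icc (-π + (2 + 2 * π) * 2 ^ (k - 1)) (-π + (1 + 2 * π) * 2 ^ k),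
        γ t = (if Even k then 1 else -1) * (2 : ℂ) ^ k *
          Complex.exp (Complex.I *
            (((t : ℂ) - ((-π + (2 + 2 * π) * 2 ^ (k - 1) : ℝ) : ℂ)) / (2 : ℂ) ^ k)))

include hseg0 harc0 hseg harc

lemma lip_main : ∀ N : ℕ, Lip1On γ (Icc 0 (aT N)) := by
  intro N
  induction N with
  | zero =>
    have hbase : Lip1On γ (Icc 0 1) := fun s hs t ht => (base_seg_dist hseg0 hs ht).le
    have harcL : Lip1On γ (Icc 1 (aT 0)) := by
      rw [aT_zero]; exact fun s hs t ht => (base_arc_dist harc0 hs ht).2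
    exact Lip1On.glue (by norm_num) (one_le_aT 0) hbase harcL
  | succ N ih =>
    have hs : Lip1On γ (Icc (aT N) (bT N)) := fun s hs t ht => (seg_dist hseg N hs ht).le
    have ha : Lip1On γ (Icc (bT N) (aT (N+1))) := fun s hs t ht => (arc_dist harc N hs ht).2
    exact Lip1On.glue (by linarith [one_le_aT N])
      (le_trans (aT_le_bT N) (bT_le_aT_succ N)) ih
      (Lip1On.glue (aT_le_bT N) (bT_le_aT_succ N) hs ha)


lemma abs_lb : ∀ N : ℕ, ∀ t ∈ Icc (0:ℝ) (aT N), t / (2 + 2 * π) ≤ Complex.abs (γ t) := by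
  have hpi := Real.pi_pos
  intro N
  induction N with
  | zero =>
    intro t ht
    rcases le_or_gt t 1 with h | h
    · rw [base_seg_abs hseg0 ⟨ht.1, h⟩]
      exact div_le_self ht.1 (by linarith)
    · have ht' : t ∈ Icc (1:ℝ) (1 + π) := ⟨h.le, by rw [← aT_zero]; exact ht.2⟩
      rw [base_arc_abs harc0 ht']
      rw [div_le_one (by linarith)]
      linarith [ht'.2]
  | succ N ih =>
    intro t ht
    rcases le_or_gt t (aT N) with h | h
    · exact ih t ⟨ht.1, h⟩
    rcases le_or_gt t (bT N) with h2 | h2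
    · rw [seg_abs hseg N ⟨h.le, h2⟩]
      have hb := bT_le_const_mul N
      rw [div_le_iff₀ (by linarith)]
      have := two_pow_pos' N
      nlinarith
    · rw [arc_abs harc N ⟨h2.le, ht.2⟩]
      have hb := aT_le_const_mul (N + 1)
      rw [div_le_iff₀ (by linarith)]
      have := two_pow_pos' (N + 1)
      nlinarith [ht.2]

end main

lemma cover (N : ℕ) : Icc (0:ℝ) (aT N) ⊆
    (Icc 0 1 ∪ Icc 1 (aT 0)) ∪
      ⋃ j ∈ Finset.range N, (Icc (aT j) (bT j) ∪ Icc (bT j) (aT (j+1))) := by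
  induction N with
  | zero =>
    intro t ht
    left
    rcases le_or_gt t 1 with h | h
    · exact Or.inl ⟨ht.1, h⟩
    · exact Or.inr ⟨h.le, ht.2⟩
  | succ N ih =>
    intro t ht
    rcases le_or_gt t (aT N) with h | h
    · rcases ih ⟨ht.1, h⟩ with h' | h'
      · exact Or.inl h'
      · right
        simp only [Set.mem_iUnion, Finset.mem_range] at h' ⊢
        obtain ⟨j, hj, hmem⟩ := h'
        exact ⟨j, hj.trans (Nat.lt_succ_self N), hmem⟩
    · right
      simp only [Set.mem_iUnion, Finset.mem_range]
      refine ⟨N, Nat.lt_succ_self N, ?_⟩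
      rcases le_or_gt t (bT N) with h2 | h2
      · exact Or.inl ⟨h.le, h2⟩
      · exact Or.inr ⟨h2.le, ht.2⟩

lemma vol_le_of_diam {A : Set ℝ} {c : ℝ} (h : ∀ s ∈ A, ∀ t ∈ A, |s - t| ≤ c) :
    volume A ≤ ENNReal.ofReal c :=
  (Real.volume_le_diam A).trans (EMetric.diam_le fun x hx y hy => by
    rw [edist_dist, Real.dist_eq]; exact ENNReal.ofReal_le_ofReal (h x hx y hy))

section main2
variable {γ : ℝ → ℂ}
variable (hseg0 : ∀ t ∈ Set.Icc (0 : ℝ) 1, γ t = (t : ℂ))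
    (harc0 : ∀ t ∈ Set.Icc (1 : ℝ) (1 + π),
      γ t = Complex.exp (Complex.I * ((t : ℂ) - 1)))
    (hseg : ∀ k : ℕ, 1 ≤ k →
      ∀ t ∈ Set.Icc (-π + (1 + 2 * π) * 2 ^ (k - 1)) (-π + (2 + 2 * π) * 2 ^ (k - 1)),
        γ t = (if Even k then 1 else -1) *
          ((2 : ℂ) ^ (k - 1) + ((t : ℂ) - ((-π + (1 + 2 * π) * 2 ^ (k - 1) : ℝ) : ℂ))))
    (harc : ∀ k : ℕ, 1 ≤ k →
      ∀ t ∈ Set.Icc (-π + (2 + 2 * π) * 2 ^ (k - 1)) (-π + (1 + 2 * π) * 2 ^ k),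
        γ t = (if Even k then 1 else -1) * (2 : ℂ) ^ k *
          Complex.exp (Complex.I *
            (((t : ℂ) - ((-π + (2 + 2 * π) * 2 ^ (k - 1) : ℝ) : ℂ)) / (2 : ℂ) ^ k)))

include hseg0 harc0 hseg harc

lemma lipschitzOn_main (N : ℕ) : LipschitzOnWith 1 γ (Icc 0 (aT N)) := by
  apply LipschitzOnWith.of_dist_le_mul
  intro x hx y hy
  rw [Complex.dist_eq, Real.dist_eq]
  simpa using lip_main hseg0 harc0 hseg harc N x hx y hy

lemma lower_bound {z : ℂ} {r : ℝ} (hz : z ∈ curveSet γ) (hr : 0 < r) :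
    ENNReal.ofReal r ≤ μH[1] (curveSet γ ∩ ball z r) := by
  obtain ⟨s, hs, rfl⟩ := hz
  rw [mem_Ici] at hs
  obtain ⟨N, hN⟩ := pow_unbounded_of_one_lt (max (r + Complex.abs (γ s)) s)
    (by norm_num : (1:ℝ) < 2)
  have hsN : s ≤ aT N := le_trans (le_trans (le_max_right _ _) hN.le) (two_pow_le_aT N)
  have hrN : r + Complex.abs (γ s) ≤ 2 ^ N :=
    le_trans (le_trans (le_max_left _ _) hN.le) (le_refl _)
  have hsub : Icc s (aT N) ⊆ Icc 0 (aT N) := Icc_subset_Icc hs (le_refl _)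
  have hcont : ContinuousOn γ (Icc s (aT N)) :=
    ((lipschitzOn_main hseg0 harc0 hseg harc N).mono hsub).continuousOn
  set f : ℝ → ℝ := fun t => dist (γ t) (γ s) with hf
  have hfc : ContinuousOn f (Icc s (aT N)) :=
    (continuous_id.dist continuous_const).comp_continuousOn hcont
  have hconn : IsPreconnected (f '' Icc s (aT N)) := (isPreconnected_Icc).image f hfc
  have h0 : (0:ℝ) ∈ f '' Icc s (aT N) := ⟨s, ⟨le_refl s, hsN⟩, by simp [hf]⟩
  have hend : f (aT N) ∈ f '' Icc s (aT N) := mem_image_of_mem f ⟨hsN, le_refl _⟩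
  have hendge : r ≤ f (aT N) := by
    have habs : Complex.abs (γ (aT N)) = 2 ^ N := by
      have := seg_abs hseg N (⟨le_refl _, aT_le_bT N⟩ : aT N ∈ Icc (aT N) (bT N))
      simpa using this
    have htri : Complex.abs (γ (aT N)) ≤ Complex.abs (γ (aT N) - γ s) + Complex.abs (γ s) := by
      calc Complex.abs (γ (aT N)) = Complex.abs ((γ (aT N) - γ s) + γ s) := by ring_nf
        _ ≤ _ := Complex.abs.add_le _ _
    have heq : f (aT N) = Complex.abs (γ (aT N) - γ s) := Complex.dist_eq _ _
    rw [heq]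
    rw [habs] at htri
    linarith
  have hIcc : Icc (0:ℝ) (f (aT N)) ⊆ f '' Icc s (aT N) := hconn.Icc_subset h0 hend
  have hinc : Ico (0:ℝ) r ⊆ (fun w => dist w (γ s)) '' (curveSet γ ∩ ball (γ s) r) := by
    intro v hv
    obtain ⟨t, htmem, htv⟩ := hIcc ⟨hv.1, le_trans hv.2.le hendge⟩
    refine ⟨γ t, ⟨⟨t, le_trans hs htmem.1, rfl⟩, ?_⟩, htv⟩
    rw [mem_ball]
    exact lt_of_le_of_lt (le_of_eq (htv : dist (γ t) (γ s) = v)) hv.2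
  calc ENNReal.ofReal r = μH[1] (Ico (0:ℝ) r) := by
        rw [MeasureTheory.hausdorffMeasure_real, Real.volume_Ico, sub_zero]
    _ ≤ μH[1] ((fun w => dist w (γ s)) '' (curveSet γ ∩ ball (γ s) r)) := measure_mono hinc
    _ ≤ μH[1] (curveSet γ ∩ ball (γ s) r) := by
        have h := (LipschitzWith.dist_left (γ s)).hausdorffMeasure_image_le
          (le_of_lt one_pos : (0:ℝ) ≤ 1) (curveSet γ ∩ ball (γ s) r)
        simpa using h


lemma upper_bound (z : ℂ) {r : ℝ} (hr : 0 < r) :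
    μH[1] (curveSet γ ∩ ball z r) ≤ ENNReal.ofReal (40 * r) := by
  classical
  have hpi := Real.pi_pos
  have hpi4 := Real.pi_le_four
  set Z := Complex.abs z with hZdef
  have hZ0 : 0 ≤ Z := Complex.abs.nonneg z
  obtain ⟨N, hN⟩ := pow_unbounded_of_one_lt ((2 + 2*π) * (Z + r)) (by norm_num : (1:ℝ) < 2)
  set A : Set ℝ := Icc 0 (aT N) ∩ γ ⁻¹' (ball z r) with hA
  have habs_mem : ∀ t : ℝ, γ t ∈ ball z r → Complex.abs (γ t) < Z + r := by
    intro t ht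
    rw [mem_ball, Complex.dist_eq, ← Complex.abs_apply] at ht
    have h1 : Complex.abs (γ t) ≤ Complex.abs (γ t - z) + Complex.abs z := by
      have := Complex.abs.add_le (γ t - z) z; simpa using this
    linarith
  have habs_mem' : ∀ t : ℝ, γ t ∈ ball z r → Z - r < Complex.abs (γ t) := by
    intro t ht
    rw [mem_ball, Complex.dist_eq, ← Complex.abs_apply] at ht
    have h0 : Complex.abs (z - γ t) = Complex.abs (γ t - z) := by
      rw [← neg_sub, AbsoluteValue.map_neg]
    have h1 : Complex.abs z ≤ Complex.abs (z - γ t) + Complex.abs (γ t) := by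
      have := Complex.abs.add_le (z - γ t) (γ t)
      rw [show z - γ t + γ t = z by ring] at this
      exact this
    linarith
  have htime : ∀ t : ℝ, 0 ≤ t → γ t ∈ ball z r → t < (2 + 2*π) * (Z + r) := by
    intro t ht0 htb
    obtain ⟨M, hM⟩ := pow_unbounded_of_one_lt t (by norm_num : (1:ℝ) < 2)
    have htM : t ∈ Icc 0 (aT M) := ⟨ht0, le_trans hM.le (two_pow_le_aT M)⟩
    have h1 := abs_lb hseg0 harc0 hseg harc M t htM
    have h2 := habs_mem t htb
    rw [div_le_iff₀ (by linarith : (0:ℝ) < 2 + 2*π)] at h1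
    nlinarith
  have hinc : curveSet γ ∩ ball z r ⊆ γ '' A := by
    rintro w ⟨⟨t, ht, rfl⟩, hb⟩
    rw [mem_Ici] at ht
    have h1 := htime t ht hb
    have h2N : (2 + 2*π) * (Z + r) ≤ aT N := le_trans hN.le (two_pow_le_aT N)
    exact ⟨t, ⟨⟨ht, by linarith⟩, hb⟩, rfl⟩
  have hstep : μH[1] (curveSet γ ∩ ball z r) ≤ volume A := by
    calc μH[1] (curveSet γ ∩ ball z r) ≤ μH[1] (γ '' A) := measure_mono hinc
      _ ≤ 1 * μH[1] A := by
          have hmono : LipschitzOnWith 1 γ A :=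
            (lipschitzOn_main hseg0 harc0 hseg harc N).mono
              (by rw [hA]; exact inter_subset_left)
          have h := hmono.hausdorffMeasure_image_le (le_of_lt one_pos : (0:ℝ) ≤ 1)
          simpa using h
      _ = volume A := by rw [one_mul, MeasureTheory.hausdorffMeasure_real]
  rcases le_or_gt Z (3*r) with hcase | hcase
  · refine hstep.trans ?_
    have hsub : A ⊆ Ico 0 ((2 + 2*π)*(Z + r)) := fun t ht => ⟨ht.1.1, htime t ht.1.1 ht.2⟩
    calc volume A ≤ volume (Ico 0 ((2 + 2*π)*(Z + r))) := measure_mono hsub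
      _ = ENNReal.ofReal ((2 + 2*π)*(Z + r)) := by rw [Real.volume_Ico, sub_zero]
      _ ≤ ENNReal.ofReal (40 * r) := ENNReal.ofReal_le_ofReal (by nlinarith)
  · -- |z| > 3 r : only few pieces meet the ball
    have hdiam : ∀ P : Set ℝ,
        (∀ s ∈ P, ∀ t ∈ P, 2/π * |s - t| ≤ Complex.abs (γ s - γ t)) →
        volume (A ∩ P) ≤ ENNReal.ofReal (π * r) := by
      intro P hP
      apply vol_le_of_diam
      intro s hsm t htm
      have h1 := hP s hsm.2 t htm.2
      have h2 : Complex.abs (γ s - γ t) < 2 * r := by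
        have hsb := hsm.1.2
        have htb := htm.1.2
        rw [mem_preimage, mem_ball] at hsb htb
        calc Complex.abs (γ s - γ t) = dist (γ s) (γ t) := (Complex.dist_eq _ _).symm
          _ ≤ dist (γ s) z + dist z (γ t) := dist_triangle _ _ _
          _ < r + r := add_lt_add hsb (by rw [dist_comm]; exact htb)
          _ = 2 * r := by ring
      have h3 : 2/π * |s - t| < 2 * r := lt_of_le_of_lt h1 h2
      rw [div_mul_eq_mul_div, div_lt_iff₀ hpi] at h3
      nlinarith [abs_nonneg (s - t)]
    have hP0 : volume (A ∩ Icc 0 1) ≤ ENNReal.ofReal (π * r) := by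
      apply hdiam
      intro s hsm t htm
      rw [base_seg_dist hseg0 hsm htm]
      have h2pi : 2/π ≤ 1 := by rw [div_le_one hpi]; linarith [Real.pi_gt_three]
      nlinarith [abs_nonneg (s - t)]
    have hP1 : volume (A ∩ Icc 1 (aT 0)) ≤ ENNReal.ofReal (π * r) := by
      apply hdiam
      intro s hsm t htm
      rw [aT_zero] at hsm htm
      exact (base_arc_dist harc0 hsm htm).1
    have hPS : ∀ j : ℕ, volume (A ∩ Icc (aT j) (bT j)) ≤ ENNReal.ofReal (π * r) := by
      intro j
      apply hdiam
      intro s hsm t htm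
      rw [seg_dist hseg j hsm htm]
      have h2pi : 2/π ≤ 1 := by rw [div_le_one hpi]; linarith [Real.pi_gt_three]
      nlinarith [abs_nonneg (s - t)]
    have hPA : ∀ j : ℕ, volume (A ∩ Icc (bT j) (aT (j+1))) ≤ ENNReal.ofReal (π * r) := by
      intro j
      exact hdiam _ (fun s hsm t htm => (arc_dist harc j hsm htm).1)
    -- emptiness criterion
    have hempty : ∀ P : Set ℝ, ∀ lo hi : ℝ,
        (∀ t ∈ P, lo ≤ Complex.abs (γ t) ∧ Complex.abs (γ t) ≤ hi) →
        (Z + r ≤ lo ∨ hi ≤ Z - r) → A ∩ P = ∅ := by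
      intro P lo hi hbound hc
      ext t
      simp only [mem_inter_iff, mem_empty_iff_false, iff_false, not_and]
      intro htA htP
      have h1 := habs_mem t htA.2
      have h2 := habs_mem' t htA.2
      have h3 := hbound t htP
      rcases hc with h | h
      · linarith [h3.1]
      · linarith [h3.2]
    set g : ℕ → ℝ≥0∞ := fun j =>
      volume (A ∩ Icc (aT j) (bT j)) + volume (A ∩ Icc (bT j) (aT (j+1))) with hg
    set F : Finset ℕ :=
      (Finset.range N).filter (fun j => (2:ℝ)^j < Z + r ∧ Z - r < 2^(j+1)) with hF
    have hg0 : ∀ j ∈ Finset.range N, j ∉ F → g j = 0 := by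
      intro j hj hjF
      have hQ : ¬((2:ℝ)^j < Z + r ∧ Z - r < 2^(j+1)) := fun hq =>
        hjF (by rw [hF, Finset.mem_filter]; exact ⟨hj, hq⟩)
      have hsegbd : ∀ t ∈ Icc (aT j) (bT j),
          (2:ℝ)^j ≤ Complex.abs (γ t) ∧ Complex.abs (γ t) ≤ 2^(j+1) := by
        intro t ht
        rw [seg_abs hseg j ht]
        have h1 := ht.1
        have h2 := ht.2
        have h3 := bT_sub_aT j
        constructor
        · linarith
        · rw [pow_succ]; linarith
      have harcbd : ∀ t ∈ Icc (bT j) (aT (j+1)),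
          (2:ℝ)^(j+1) ≤ Complex.abs (γ t) ∧ Complex.abs (γ t) ≤ 2^(j+1) := by
        intro t ht
        rw [arc_abs harc j ht]
        exact ⟨le_refl _, le_refl _⟩
      rw [not_and_or, not_lt, not_lt] at hQ
      have hj2 : (2:ℝ)^j ≤ 2^(j+1) := by
        have := two_pow_pos' j; rw [pow_succ]; linarith
      rcases hQ with h | h
      · have e1 : A ∩ Icc (aT j) (bT j) = ∅ := hempty _ ((2:ℝ)^j) (2^(j+1)) hsegbd (Or.inl h)
        have e2 : A ∩ Icc (bT j) (aT (j+1)) = ∅ :=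
          hempty _ ((2:ℝ)^(j+1)) (2^(j+1)) harcbd (Or.inl (le_trans h hj2))
        rw [hg]; simp [e1, e2]
      · have e1 : A ∩ Icc (aT j) (bT j) = ∅ := hempty _ ((2:ℝ)^j) (2^(j+1)) hsegbd (Or.inr h)
        have e2 : A ∩ Icc (bT j) (aT (j+1)) = ∅ :=
          hempty _ ((2:ℝ)^(j+1)) (2^(j+1)) harcbd (Or.inr h)
        rw [hg]; simp [e1, e2]
    have hgF : ∀ j : ℕ, g j ≤ ENNReal.ofReal (π * r) + ENNReal.ofReal (π * r) := fun j =>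
      add_le_add (hPS j) (hPA j)
    have hcard : F.card ≤ 2 := by
      by_cases hFe : F.Nonempty
      · have hFprop : ∀ j ∈ F, (2:ℝ)^j < Z + r ∧ Z - r < 2^(j+1) := by
          intro j hj
          rw [hF, Finset.mem_filter] at hj
          exact hj.2
        have hsub2 : F ⊆ {F.min' hFe, F.min' hFe + 1} := by
          intro j hj
          have hm := hFprop _ (F.min'_mem hFe)
          have hjq := hFprop _ hj
          have hmle : F.min' hFe ≤ j := F.min'_le j hj
          have hjle : j ≤ F.min' hFe + 1 := by
            by_contra hcon
            push_neg at hcon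
            have hpow2 : (2:ℝ)^(F.min' hFe + 2) ≤ 2^j :=
              pow_le_pow_right₀ (by norm_num) hcon
            have h1 := hjq.1
            have h2 := hm.2
            have h3 : (2:ℝ)^(F.min' hFe + 2) = 2 * 2^(F.min' hFe + 1) := by rw [pow_succ]; ring
            nlinarith
          have : j = F.min' hFe ∨ j = F.min' hFe + 1 := by omega
          rcases this with h | h <;> simp [h]
        calc F.card ≤ ({F.min' hFe, F.min' hFe + 1} : Finset ℕ).card :=
              Finset.card_le_card hsub2
          _ ≤ 2 := Finset.card_insert_le _ _ |>.trans (by simp)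
      · rw [Finset.not_nonempty_iff_eq_empty] at hFe
        simp [hFe]
    have hcover2 : A ⊆ ((A ∩ Icc 0 1) ∪ (A ∩ Icc 1 (aT 0))) ∪
        ⋃ j ∈ Finset.range N, ((A ∩ Icc (aT j) (bT j)) ∪ (A ∩ Icc (bT j) (aT (j+1)))) := by
      intro t ht
      rcases cover N ht.1 with h | h
      · rcases h with h | h
        · exact Or.inl (Or.inl ⟨ht, h⟩)
        · exact Or.inl (Or.inr ⟨ht, h⟩)
      · right
        simp only [Set.mem_iUnion] at h ⊢
        obtain ⟨j, hj, hmem⟩ := h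
        rcases hmem with h' | h'
        · exact ⟨j, hj, Or.inl ⟨ht, h'⟩⟩
        · exact ⟨j, hj, Or.inr ⟨ht, h'⟩⟩
    have hsum : volume A ≤ (volume (A ∩ Icc 0 1) + volume (A ∩ Icc 1 (aT 0))) +
        ∑ j ∈ Finset.range N, g j := by
      calc volume A ≤ volume (((A ∩ Icc 0 1) ∪ (A ∩ Icc 1 (aT 0))) ∪
            ⋃ j ∈ Finset.range N, ((A ∩ Icc (aT j) (bT j)) ∪ (A ∩ Icc (bT j) (aT (j+1))))) :=
            measure_mono hcover2
        _ ≤ volume ((A ∩ Icc 0 1) ∪ (A ∩ Icc 1 (aT 0))) +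
            volume (⋃ j ∈ Finset.range N,
              ((A ∩ Icc (aT j) (bT j)) ∪ (A ∩ Icc (bT j) (aT (j+1))))) := measure_union_le _ _
        _ ≤ (volume (A ∩ Icc 0 1) + volume (A ∩ Icc 1 (aT 0))) +
            ∑ j ∈ Finset.range N, g j := by
            refine add_le_add (measure_union_le _ _) ?_
            refine le_trans (measure_biUnion_finset_le _ _) ?_
            exact Finset.sum_le_sum fun j _ => measure_union_le _ _
    have hsum2 : ∑ j ∈ Finset.range N, g j ≤
        2 * (ENNReal.ofReal (π * r) + ENNReal.ofReal (π * r)) := by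
      have he : ∑ j ∈ F, g j = ∑ j ∈ Finset.range N, g j :=
        Finset.sum_subset (by rw [hF]; exact Finset.filter_subset _ _) hg0
      rw [← he]
      calc ∑ j ∈ F, g j ≤ ∑ _j ∈ F, (ENNReal.ofReal (π * r) + ENNReal.ofReal (π * r)) :=
            Finset.sum_le_sum fun j _ => hgF j
        _ = F.card * (ENNReal.ofReal (π * r) + ENNReal.ofReal (π * r)) := by
            rw [Finset.sum_const, nsmul_eq_mul]
        _ ≤ 2 * (ENNReal.ofReal (π * r) + ENNReal.ofReal (π * r)) := by
            apply mul_le_mul_left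
            exact_mod_cast Nat.cast_le.mpr hcard
    refine hstep.trans (hsum.trans ?_)
    have hfin : (volume (A ∩ Icc 0 1) + volume (A ∩ Icc 1 (aT 0))) +
        ∑ j ∈ Finset.range N, g j ≤
        (ENNReal.ofReal (π * r) + ENNReal.ofReal (π * r)) +
          2 * (ENNReal.ofReal (π * r) + ENNReal.ofReal (π * r)) :=
      add_le_add (add_le_add hP0 hP1) hsum2
    refine hfin.trans ?_
    have hx : (ENNReal.ofReal (π * r) + ENNReal.ofReal (π * r)) +
        2 * (ENNReal.ofReal (π * r) + ENNReal.ofReal (π * r)) =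
        ENNReal.ofReal (6 * (π * r)) := by
      rw [two_mul]
      repeat rw [← ENNReal.ofReal_add (by positivity) (by positivity)]
      congr 1
      ring
    rw [hx]
    exact ENNReal.ofReal_le_ofReal (by nlinarith)

end main2

/-- the Tessera curve space `(X_T, d, Λ)` is Ahlfors–David regular of
dimension 1, and in particular it is a space of homogeneous type. -/
theorem tessera_ahlforsDavid
    (γ : ℝ → ℂ)
    (hseg0 : ∀ t ∈ Set.Icc (0 : ℝ) 1, γ t = (t : ℂ))
    (harc0 : ∀ t ∈ Set.Icc (1 : ℝ) (1 + π),
      γ t = Complex.exp (Complex.I * ((t : ℂ) - 1)))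
    (hseg : ∀ k : ℕ, 1 ≤ k →
      ∀ t ∈ Set.Icc (-π + (1 + 2 * π) * 2 ^ (k - 1)) (-π + (2 + 2 * π) * 2 ^ (k - 1)),
        γ t = (if Even k then 1 else -1) *
          ((2 : ℂ) ^ (k - 1) + ((t : ℂ) - ((-π + (1 + 2 * π) * 2 ^ (k - 1) : ℝ) : ℂ))))
    (harc : ∀ k : ℕ, 1 ≤ k →
      ∀ t ∈ Set.Icc (-π + (2 + 2 * π) * 2 ^ (k - 1)) (-π + (1 + 2 * π) * 2 ^ k),
        γ t = (if Even k then 1 else -1) * (2 : ℂ) ^ k *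
          Complex.exp (Complex.I *
            (((t : ℂ) - ((-π + (2 + 2 * π) * 2 ^ (k - 1) : ℝ) : ℂ)) / (2 : ℂ) ^ k))) :
    (∃ C : ℝ, 0 < C ∧ ∀ z ∈ curveSet γ, ∀ r : ℝ, 0 < r →
      ENNReal.ofReal (r / C) ≤ μH[1] (curveSet γ ∩ ball z r) ∧
      μH[1] (curveSet γ ∩ ball z r) ≤ ENNReal.ofReal (C * r)) ∧
    ∃ C_D : ℝ≥0, ∀ z ∈ curveSet γ, ∀ r : ℝ, 0 < r →
      0 < μH[1] (curveSet γ ∩ ball z (2 * r)) ∧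
      μH[1] (curveSet γ ∩ ball z (2 * r)) ≤
        (C_D : ℝ≥0∞) * μH[1] (curveSet γ ∩ ball z r) ∧
      μH[1] (curveSet γ ∩ ball z r) < ⊤ := by
  have hlow : ∀ z ∈ curveSet γ, ∀ r : ℝ, 0 < r →
      ENNReal.ofReal r ≤ μH[1] (curveSet γ ∩ ball z r) :=
    fun z hz r hr => lower_bound hseg0 harc0 hseg harc hz hr
  have hup : ∀ (z : ℂ) (r : ℝ), 0 < r →
      μH[1] (curveSet γ ∩ ball z r) ≤ ENNReal.ofReal (40 * r) :=
    fun z r hr => upper_bound hseg0 harc0 hseg harc z hr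
  constructor
  · refine ⟨40, by norm_num, fun z hz r hr => ⟨?_, ?_⟩⟩
    · exact le_trans (ENNReal.ofReal_le_ofReal (by linarith : r / 40 ≤ r)) (hlow z hz r hr)
    · exact hup z r hr
  · refine ⟨3200, fun z hz r hr => ⟨?_, ?_, ?_⟩⟩
    · exact lt_of_lt_of_le (ENNReal.ofReal_pos.mpr (by linarith : (0:ℝ) < 2 * r))
        (hlow z hz (2 * r) (by linarith))
    · calc μH[1] (curveSet γ ∩ ball z (2 * r)) ≤ ENNReal.ofReal (40 * (2 * r)) :=
            hup z (2 * r) (by linarith)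
        _ = ENNReal.ofReal 80 * ENNReal.ofReal r := by
            rw [← ENNReal.ofReal_mul (by norm_num : (0:ℝ) ≤ 80)]
            congr 1; ring
        _ ≤ ((3200 : ℝ≥0) : ℝ≥0∞) * μH[1] (curveSet γ ∩ ball z r) := by
            apply mul_le_mul'
            · rw [show ((3200 : ℝ≥0) : ℝ≥0∞) = ENNReal.ofReal 3200 by
                simp [ENNReal.ofReal_coe_nnreal]]
              exact ENNReal.ofReal_le_ofReal (by norm_num)
            · exact hlow z hz r hr
    · exact lt_of_le_of_lt (hup z r hr) ENNReal.ofReal_lt_top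
end

section
/- The Tessera curve space (X_T, d, Λ) does not satisfy the annular decay property (AD) (and hence does not satisfy the relative annular decay property either): indeed, for every k ≥ 1 and every ε > 0 one has Λ(B(0, 2^k + ε) ∖ B(0, 2^k)) ≥ π 2^k, while Λ(B(0,2^k)) is comparable to 2^k uniformly in k. -/
open MeasureTheory Metric Set
open scoped ENNReal NNReal Real

open Filter Complex
open scoped Topology

noncomputable section

lemma exp_mul_I_lipschitz : LipschitzWith 1 (fun θ : ℝ => Complex.exp (θ * Complex.I)) := by
  apply LipschitzWith.of_dist_le_mul
  intro x y
  rw [Complex.dist_eq, Real.dist_eq]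
  have h1 : Complex.exp (↑x * I) - Complex.exp (↑y * I)
      = Complex.exp (↑y * I) * (Complex.exp (↑(x - y) * I) - 1) := by
    rw [mul_sub, ← Complex.exp_add, mul_one]
    push_cast
    ring_nf
  rw [h1, norm_mul, Complex.norm_exp]
  simp only [Complex.mul_re, Complex.ofReal_re, Complex.I_re, Complex.ofReal_im, Complex.I_im,
    mul_zero, mul_one, zero_sub, neg_zero, zero_mul, sub_zero, Real.exp_zero, one_mul]
  set u : ℝ := x - y with hu
  clear_value u
  have h2 : Complex.exp (↑u * I) - 1 = Complex.ofReal (Real.cos u - 1) + Complex.ofReal (Real.sin u) * I := by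
    rw [Complex.exp_mul_I]
    push_cast
    ring
  have h3 : ‖Complex.exp (↑u * I) - 1‖ ^ 2 = (Real.cos u - 1)^2 + (Real.sin u)^2 := by
    rw [show ‖Complex.exp (↑u * I) - 1‖ ^ 2 = Complex.normSq (Complex.exp (↑u * I) - 1) from Complex.sq_norm _, h2]
    simp [Complex.normSq_apply, Complex.cos_ofReal_re, Complex.sin_ofReal_re]
    ring
  have h4 : (Real.cos u - 1)^2 + (Real.sin u)^2 = 2 - 2 * Real.cos u := by
    linear_combination Real.sin_sq_add_cos_sq u
  have hc := Real.one_sub_sq_div_two_le_cos (x := u)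
  have h5 : ‖Complex.exp (↑u * I) - 1‖ ^ 2 ≤ |u| ^ 2 := by
    rw [h3, h4, _root_.sq_abs]; linarith
  simpa using (pow_le_pow_iff_left₀ (norm_nonneg _) (abs_nonneg u) two_ne_zero).mp h5

lemma proj_lipschitz (A : ℂ) (r : ℝ) (hA : ‖A‖ ≤ r) (hr : 0 < r) :
    LipschitzWith 1 (fun z : ℂ => (z * A).re / r) := by
  apply LipschitzWith.of_dist_le_mul
  intro z w
  rw [Real.dist_eq, Complex.dist_eq]
  have h1 : (z * A).re / r - (w * A).re / r = ((z - w) * A).re / r := by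
    rw [sub_mul, Complex.sub_re]; ring
  rw [h1, abs_div, abs_of_pos hr]
  rw [div_le_iff₀ hr]
  calc |((z - w) * A).re| ≤ ‖(z - w) * A‖ := Complex.abs_re_le_norm _
    _ = ‖z - w‖ * ‖A‖ := norm_mul _ _
    _ ≤ ‖z - w‖ * r := by
        exact mul_le_mul_of_nonneg_left hA (norm_nonneg _)
    _ = ↑(1:ℝ≥0) * ‖z - w‖ * r := by norm_num

lemma arc_piece_lower (c : ℂ) (hc : c ≠ 0) (a h : ℝ) (hh0 : 0 ≤ h) (hhπ : h ≤ π) :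
    ENNReal.ofReal (‖c‖ * Real.sin h) ≤
      μH[1] ((fun θ : ℝ => c * Complex.exp (θ * Complex.I)) '' Ico a (a + h)) := by
  set f : ℝ → ℂ := fun θ => c * Complex.exp (θ * Complex.I) with hf
  set A : ℂ := Complex.exp (-(a:ℂ) * Complex.I) * (starRingEnd ℂ) c * (-Complex.I) with hA
  have hcpos : 0 < ‖c‖ := norm_pos_iff.mpr hc
  have hAabs : ‖A‖ ≤ ‖c‖ := by
    rw [hA, norm_mul, norm_mul, Complex.norm_exp]
    simp [Complex.norm_conj]
  set p : ℂ → ℝ := fun z => (z * A).re / ‖c‖ with hp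
  have hlip : LipschitzWith 1 p := proj_lipschitz A _ hAabs hcpos
  have hkey : ∀ θ : ℝ, p (f θ) = ‖c‖ * Real.sin (θ - a) := by
    intro θ
    have e1 : Complex.exp (↑θ * Complex.I) * Complex.exp (-(↑a) * Complex.I)
        = Complex.exp (↑(θ - a) * Complex.I) := by
      rw [← Complex.exp_add]; push_cast; ring_nf
    have e2 : f θ * A = (Complex.normSq c : ℂ) * Complex.exp (↑(θ - a) * Complex.I) * (-Complex.I) := by
      rw [hf, hA]
      calc c * Complex.exp (↑θ * Complex.I) *
            (Complex.exp (-(↑a) * Complex.I) * (starRingEnd ℂ) c * (-Complex.I))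
          = (c * (starRingEnd ℂ) c) *
            (Complex.exp (↑θ * Complex.I) * Complex.exp (-(↑a) * Complex.I)) * (-Complex.I) := by
            ring
        _ = _ := by rw [e1, Complex.mul_conj]
    have e3 : (f θ * A).re = Complex.normSq c * Real.sin (θ - a) := by
      rw [e2, Complex.exp_mul_I]
      simp only [Complex.mul_re, Complex.mul_im, Complex.add_re, Complex.add_im,
        Complex.neg_re, Complex.neg_im, Complex.I_re, Complex.I_im, Complex.ofReal_re,
        Complex.ofReal_im, Complex.cos_ofReal_re, Complex.sin_ofReal_re,
        Complex.cos_ofReal_im, Complex.sin_ofReal_im]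
      ring
    rw [hp]
    simp only [e3]
    rw [show Complex.normSq c = ‖c‖ ^ 2 from (Complex.sq_norm c).symm]
    field_simp
  have hcont : ContinuousOn (p ∘ f) (Icc a (a + h)) := by
    apply Continuous.continuousOn
    fun_prop
  have him : Ico (0:ℝ) (‖c‖ * Real.sin h) ⊆ (p ∘ f) '' Ico a (a + h) := by
    have h0 : (p ∘ f) a = 0 := by simp [Function.comp, hkey]
    have h1 : (p ∘ f) (a + h) = ‖c‖ * Real.sin h := by
      simp [Function.comp, hkey]
    have := intermediate_value_Ico (le_add_of_nonneg_right hh0) hcont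
    rwa [h0, h1] at this
  calc ENNReal.ofReal (‖c‖ * Real.sin h)
      = μH[1] (Ico (0:ℝ) (‖c‖ * Real.sin h)) := by
        rw [MeasureTheory.hausdorffMeasure_real, Real.volume_Ico, sub_zero]
    _ ≤ μH[1] ((p ∘ f) '' Ico a (a + h)) := measure_mono him
    _ = μH[1] (p '' (f '' Ico a (a + h))) := by rw [Set.image_comp]
    _ ≤ (1:ℝ≥0) ^ (1:ℝ) * μH[1] (f '' Ico a (a + h)) :=
        hlip.hausdorffMeasure_image_le zero_le_one _
    _ = μH[1] (f '' Ico a (a + h)) := by norm_num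

lemma arc_injOn (c : ℂ) (hc : c ≠ 0) :
    Set.InjOn (fun θ : ℝ => c * Complex.exp (θ * Complex.I)) (Icc 0 π) := by
  intro x hx y hy hxy
  have hexp : Complex.exp (↑x * Complex.I) = Complex.exp (↑y * Complex.I) :=
    mul_left_cancel₀ hc hxy
  rw [Complex.exp_eq_exp_iff_exists_int] at hexp
  obtain ⟨m, hm⟩ := hexp
  have him := congrArg Complex.im hm
  simp only [Complex.mul_im, Complex.add_im, Complex.ofReal_re, Complex.ofReal_im,
    Complex.I_re, Complex.I_im, Complex.mul_re, Complex.intCast_im, Complex.intCast_re,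
    Complex.re_ofNat, Complex.im_ofNat, Complex.ofReal_re] at him
  -- him : x = y + m * (2 * π)  (in some normal form)
  have hxy' : x = y + (m:ℝ) * (2 * π) := by
    have := him
    push_cast at this ⊢
    linarith [this]
  have hm0 : m = 0 := by
    by_contra hne
    have h1 : (1:ℝ) ≤ |(m:ℝ)| := by
      have := Int.one_le_abs (by omega : m ≠ 0)
      exact_mod_cast this
    have h2 : |x - y| ≤ π := by
      rw [abs_le]
      exact ⟨by linarith [hx.1, hx.2, hy.1, hy.2], by linarith [hx.1, hx.2, hy.1, hy.2]⟩
    have h3 : |x - y| = |(m:ℝ)| * (2 * π) := by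
      rw [hxy']
      rw [show y + (m:ℝ) * (2 * π) - y = (m:ℝ) * (2 * π) by ring]
      rw [abs_mul, abs_of_pos (by positivity : (0:ℝ) < 2 * π)]
    nlinarith [Real.pi_pos]
  rw [hxy', hm0]
  push_cast
  ring

lemma arc_lower (c : ℂ) :
    ENNReal.ofReal (π * ‖c‖) ≤
      μH[1] ((fun θ : ℝ => c * Complex.exp (θ * Complex.I)) '' Icc 0 π) := by
  rcases eq_or_ne c 0 with rfl | hc
  · simp
  set f : ℝ → ℂ := fun θ => c * Complex.exp (θ * Complex.I) with hf
  have hfc : Continuous f := by fun_prop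
  have hInj : Set.InjOn f (Icc 0 π) := arc_injOn c hc
  have key : ∀ n : ℕ, 1 ≤ n →
      ENNReal.ofReal ((n:ℝ) * (‖c‖ * Real.sin (π / n))) ≤ μH[1] (f '' Icc 0 π) := by
    intro n hn
    have hnpos : (0:ℝ) < n := by exact_mod_cast hn
    set h : ℝ := π / n with hhd
    have hh0 : 0 ≤ h := by positivity
    have hnh : (n:ℝ) * h = π := by rw [hhd]; field_simp
    have hhπ : h ≤ π := by
      rw [hhd]
      exact div_le_self Real.pi_pos.le (by exact_mod_cast hn)
    set A : ℕ → Set ℂ := fun i => f '' Ico ((i:ℝ) * h) ((i:ℝ) * h + h) with hA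
    have hsub : ∀ i : ℕ, i < n → Ico ((i:ℝ) * h) ((i:ℝ) * h + h) ⊆ Icc 0 π := by
      intro i hi x hx
      have hi1 : ((i:ℝ) + 1) ≤ n := by exact_mod_cast hi
      have h1 : 0 ≤ (i:ℝ) * h := by positivity
      have h2 : (i:ℝ) * h + h ≤ (n:ℝ) * h := by nlinarith
      exact ⟨le_trans h1 hx.1, by linarith [hx.2]⟩
    have hIcoIcc : ∀ i : ℕ, i < n → A i =
        f '' Icc ((i:ℝ) * h) ((i:ℝ) * h + h) \ {f ((i:ℝ) * h + h)} := by
      intro i hi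
      have hsub' : Icc ((i:ℝ) * h) ((i:ℝ) * h + h) ⊆ Icc 0 π := by
        intro x hx
        have hi1 : ((i:ℝ) + 1) ≤ n := by exact_mod_cast hi
        have h1 : 0 ≤ (i:ℝ) * h := by positivity
        have h2 := mul_le_mul_of_nonneg_right hi1 hh0
        exact ⟨by linarith [hx.1], by nlinarith [hx.2]⟩
      ext z
      constructor
      · rintro ⟨x, hx, rfl⟩
        refine ⟨⟨x, Ico_subset_Icc_self hx, rfl⟩, ?_⟩
        simp only [mem_singleton_iff]
        intro hfx
        have : x = (i:ℝ) * h + h := hInj (hsub' (Ico_subset_Icc_self hx))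
          (hsub' (right_mem_Icc.mpr (le_add_of_nonneg_right hh0))) hfx
        exact absurd this (ne_of_lt hx.2)
      · rintro ⟨⟨x, hx, rfl⟩, hne⟩
        refine ⟨x, ⟨hx.1, lt_of_le_of_ne hx.2 ?_⟩, rfl⟩
        intro hx2
        exact hne (by rw [hx2]; exact rfl)
    have hmeas : ∀ i ∈ Finset.range n, MeasurableSet (A i) := by
      intro i hi
      rw [hIcoIcc i (Finset.mem_range.mp hi)]
      exact ((isCompact_Icc.image hfc).isClosed.measurableSet).diff
        (measurableSet_singleton _)
    have hdisj : (↑(Finset.range n) : Set ℕ).PairwiseDisjoint A := by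
      intro i hi j hj hij
      simp only [Finset.coe_range, mem_Iio] at hi hj
      have hIcodisj : Disjoint (Ico ((i:ℝ) * h) ((i:ℝ) * h + h))
          (Ico ((j:ℝ) * h) ((j:ℝ) * h + h)) := by
        rw [Set.disjoint_left]
        intro x hxi hxj
        rcases lt_or_gt_of_ne hij with hlt | hlt
        · have : ((i:ℝ) + 1) ≤ j := by exact_mod_cast hlt
          nlinarith [hxi.1, hxi.2, hxj.1, hxj.2]
        · have : ((j:ℝ) + 1) ≤ i := by exact_mod_cast hlt
          nlinarith [hxi.1, hxi.2, hxj.1, hxj.2]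
      have : A i ∩ A j = ∅ := by
        rw [hA]
        simp only
        rw [← Set.InjOn.image_inter hInj (hsub i hi) (hsub j hj),
          Set.disjoint_iff_inter_eq_empty.mp hIcodisj, Set.image_empty]
      exact Set.disjoint_iff_inter_eq_empty.mpr this
    have hunion : μH[1] (⋃ i ∈ Finset.range n, A i) = ∑ i ∈ Finset.range n, μH[1] (A i) :=
      measure_biUnion_finset hdisj hmeas
    have husub : (⋃ i ∈ Finset.range n, A i) ⊆ f '' Icc 0 π := by
      refine Set.iUnion₂_subset fun i hi => ?_
      exact Set.image_mono (hsub i (Finset.mem_range.mp hi))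
    have hpiece : ∀ i ∈ Finset.range n,
        ENNReal.ofReal (‖c‖ * Real.sin h) ≤ μH[1] (A i) := fun i _ =>
      arc_piece_lower c hc ((i:ℝ) * h) h hh0 hhπ
    calc ENNReal.ofReal ((n:ℝ) * (‖c‖ * Real.sin h))
        = ∑ _i ∈ Finset.range n, ENNReal.ofReal (‖c‖ * Real.sin h) := by
          rw [Finset.sum_const, Finset.card_range, nsmul_eq_mul,
            ENNReal.ofReal_mul (by positivity : (0:ℝ) ≤ (n:ℝ)), ENNReal.ofReal_natCast]
      _ ≤ ∑ i ∈ Finset.range n, μH[1] (A i) := Finset.sum_le_sum hpiece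
      _ = μH[1] (⋃ i ∈ Finset.range n, A i) := hunion.symm
      _ ≤ μH[1] (f '' Icc 0 π) := measure_mono husub
  -- the limit
  have h1 : Filter.Tendsto (fun x : ℝ => Real.sin x / x) (nhdsWithin 0 {(0:ℝ)}ᶜ) (nhds 1) := by
    have hd := Real.hasDerivAt_sin 0
    rw [hasDerivAt_iff_tendsto_slope] at hd
    have : slope Real.sin 0 = fun x : ℝ => Real.sin x / x := by
      funext x
      rw [slope_def_field]
      simp
    rw [this, Real.cos_zero] at hd
    exact hd
  have h2 : Filter.Tendsto (fun n : ℕ => π / (n:ℝ)) Filter.atTop (nhdsWithin 0 {(0:ℝ)}ᶜ) := by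
    rw [tendsto_nhdsWithin_iff]
    constructor
    · exact tendsto_const_div_atTop_nhds_zero_nat π
    · filter_upwards [Filter.eventually_ge_atTop 1] with n hn
      have : (0:ℝ) < π / n := div_pos Real.pi_pos (by exact_mod_cast hn)
      simp only [Set.mem_compl_iff, Set.mem_singleton_iff]
      exact ne_of_gt this
  have h3 : Filter.Tendsto (fun n : ℕ => Real.sin (π / n) / (π / n)) Filter.atTop (nhds 1) :=
    h1.comp h2
  have h4 : Filter.Tendsto (fun n : ℕ => (n:ℝ) * (‖c‖ * Real.sin (π / n)))
      Filter.atTop (nhds (π * ‖c‖)) := by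
    have h5 : Filter.Tendsto (fun n : ℕ => (π * ‖c‖) * (Real.sin (π / n) / (π / n)))
        Filter.atTop (nhds (π * ‖c‖)) := by
      have := h3.const_mul (π * ‖c‖)
      simpa using this
    apply h5.congr'
    filter_upwards [Filter.eventually_ge_atTop 1] with n hn
    have hn0 : (n:ℝ) ≠ 0 := by
      have : (0:ℝ) < n := by exact_mod_cast hn
      exact ne_of_gt this
    field_simp
  refine le_of_tendsto ((ENNReal.continuous_ofReal.tendsto _).comp h4) ?_
  filter_upwards [Filter.eventually_ge_atTop 1] with n hn
  exact key n hn

lemma circle_lipschitz (c : ℂ) :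
    LipschitzWith (‖c‖).toNNReal (fun θ : ℝ => c * Complex.exp (θ * Complex.I)) := by
  apply LipschitzWith.of_dist_le_mul
  intro x y
  have hd := exp_mul_I_lipschitz.dist_le_mul x y
  simp only [NNReal.coe_one, one_mul] at hd
  calc dist (c * Complex.exp (↑x * Complex.I)) (c * Complex.exp (↑y * Complex.I))
      = ‖c‖ * dist (Complex.exp (↑x * Complex.I)) (Complex.exp (↑y * Complex.I)) := by
        rw [Complex.dist_eq, Complex.dist_eq, ← mul_sub, norm_mul]
    _ ≤ ‖c‖ * dist x y := by
        exact mul_le_mul_of_nonneg_left hd (norm_nonneg _)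
    _ = ↑(‖c‖).toNNReal * dist x y := by
        rw [Real.coe_toNNReal _ (norm_nonneg _)]

lemma curve_loc (γ : ℝ → ℂ)
    (hseg0 : ∀ t ∈ Set.Icc (0 : ℝ) 1, γ t = (t : ℂ))
    (harc0 : ∀ t ∈ Set.Icc (1 : ℝ) (1 + π),
      γ t = Complex.exp (Complex.I * ((t : ℂ) - 1)))
    (hseg : ∀ k : ℕ, 1 ≤ k →
      ∀ t ∈ Set.Icc (-π + (1 + 2 * π) * 2 ^ (k - 1)) (-π + (2 + 2 * π) * 2 ^ (k - 1)),
        γ t = (if Even k then 1 else -1) *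
          ((2 : ℂ) ^ (k - 1) + ((t : ℂ) - ((-π + (1 + 2 * π) * 2 ^ (k - 1) : ℝ) : ℂ))))
    (harc : ∀ k : ℕ, 1 ≤ k →
      ∀ t ∈ Set.Icc (-π + (2 + 2 * π) * 2 ^ (k - 1)) (-π + (1 + 2 * π) * 2 ^ k),
        γ t = (if Even k then 1 else -1) * (2 : ℂ) ^ k *
          Complex.exp (Complex.I *
            (((t : ℂ) - ((-π + (2 + 2 * π) * 2 ^ (k - 1) : ℝ) : ℂ)) / (2 : ℂ) ^ k)))
    (t : ℝ) (ht : 0 ≤ t) :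
    (∃ x : ℝ, γ t = (x : ℂ)) ∨
    (∃ j : ℕ, ∃ θ : ℝ, θ ∈ Icc (0:ℝ) (2*π) ∧
      γ t = (2:ℂ)^j * Complex.exp ((θ:ℂ) * Complex.I)) := by
  have hπ := Real.pi_pos
  rcases le_or_gt t 1 with h1 | h1
  · exact Or.inl ⟨t, hseg0 t ⟨ht, h1⟩⟩
  rcases le_or_gt t (1 + π) with h2 | h2
  · right
    refine ⟨0, t - 1, ⟨by linarith, by linarith⟩, ?_⟩
    rw [harc0 t ⟨h1.le, h2⟩, pow_zero, one_mul]
    congr 1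
    push_cast
    ring
  have hex : ∃ m : ℕ, t < -π + (1 + 2*π) * 2^m := by
    obtain ⟨m, hm⟩ := pow_unbounded_of_one_lt (t + π) (by norm_num : (1:ℝ) < 2)
    refine ⟨m, ?_⟩
    have hp : (0:ℝ) < 2^m := by positivity
    nlinarith
  classical
  have hPm : t < -π + (1 + 2*π) * 2^(Nat.find hex) := Nat.find_spec hex
  set m := Nat.find hex with hmdef
  have hm1 : 1 ≤ m := by
    by_contra h0
    have hm0 : m = 0 := by omega
    rw [hm0] at hPm
    simp at hPm
    linarith
  have hPm' : ¬ (t < -π + (1 + 2*π) * 2^(m-1)) := Nat.find_min hex (by omega)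
  push_neg at hPm'
  have h2m : (2:ℝ)^m = 2 * 2^(m-1) := by
    conv_lhs => rw [show m = (m-1)+1 by omega]
    ring
  rcases le_or_gt t (-π + (2 + 2*π) * 2^(m-1)) with h3 | h3
  · left
    have hγ := hseg m hm1 t ⟨hPm', h3⟩
    by_cases hEv : Even m
    · refine ⟨2^(m-1) + (t - (-π + (1+2*π)*2^(m-1))), ?_⟩
      rw [hγ]
      simp only [if_pos hEv, one_mul]
      push_cast
      ring
    · refine ⟨-(2^(m-1) + (t - (-π + (1+2*π)*2^(m-1)))), ?_⟩
      rw [hγ]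
      simp only [if_neg hEv]
      push_cast
      ring
  · right
    have hγ := harc m hm1 t ⟨h3.le, hPm.le⟩
    set θ' : ℝ := (t - (-π + (2 + 2*π) * 2^(m-1))) / 2^m with hθ'
    have hp : (0:ℝ) < 2^m := by positivity
    have hθ0 : 0 ≤ θ' := div_nonneg (by linarith) hp.le
    have hθπ : θ' ≤ π := by
      rw [hθ', div_le_iff₀ hp]
      nlinarith [hPm, h2m]
    have hcast : Complex.I * (((t:ℂ) - ((-π + (2 + 2*π) * 2^(m-1) : ℝ) : ℂ)) / (2:ℂ)^m)
        = (θ' : ℂ) * Complex.I := by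
      have hpc : ((2:ℂ)^m) ≠ 0 := pow_ne_zero m two_ne_zero
      rw [hθ']
      push_cast
      field_simp
    by_cases hEv : Even m
    · refine ⟨m, θ', ⟨hθ0, by linarith⟩, ?_⟩
      rw [hγ, hcast]
      simp only [if_pos hEv, one_mul]
    · refine ⟨m, θ' + π, ⟨by linarith, by linarith⟩, ?_⟩
      rw [hγ, hcast]
      simp only [if_neg hEv]
      have : ((θ' + π : ℝ):ℂ) * Complex.I = (θ' : ℂ) * Complex.I + (π:ℂ) * Complex.I := by
        push_cast
        ring
      rw [this, Complex.exp_add, Complex.exp_pi_mul_I]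
      ring


lemma curve_upper (γ : ℝ → ℂ)
    (hseg0 : ∀ t ∈ Set.Icc (0 : ℝ) 1, γ t = (t : ℂ))
    (harc0 : ∀ t ∈ Set.Icc (1 : ℝ) (1 + π),
      γ t = Complex.exp (Complex.I * ((t : ℂ) - 1)))
    (hseg : ∀ k : ℕ, 1 ≤ k →
      ∀ t ∈ Set.Icc (-π + (1 + 2 * π) * 2 ^ (k - 1)) (-π + (2 + 2 * π) * 2 ^ (k - 1)),
        γ t = (if Even k then 1 else -1) *
          ((2 : ℂ) ^ (k - 1) + ((t : ℂ) - ((-π + (1 + 2 * π) * 2 ^ (k - 1) : ℝ) : ℂ))))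
    (harc : ∀ k : ℕ, 1 ≤ k →
      ∀ t ∈ Set.Icc (-π + (2 + 2 * π) * 2 ^ (k - 1)) (-π + (1 + 2 * π) * 2 ^ k),
        γ t = (if Even k then 1 else -1) * (2 : ℂ) ^ k *
          Complex.exp (Complex.I *
            (((t : ℂ) - ((-π + (2 + 2 * π) * 2 ^ (k - 1) : ℝ) : ℂ)) / (2 : ℂ) ^ k)))
    (k : ℕ) :
    μH[1] (curveSet γ ∩ ball (0:ℂ) (2^k)) ≤ ENNReal.ofReal (16 * 2^k) := by
  have hπ := Real.pi_pos
  have hsub : curveSet γ ∩ ball (0:ℂ) (2^k) ⊆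
      ((fun x:ℝ => (x:ℂ)) '' Icc (-(2^k:ℝ)) (2^k)) ∪
      ⋃ j ∈ Finset.range k,
        (fun θ:ℝ => (2:ℂ)^j * Complex.exp ((θ:ℂ) * Complex.I)) '' Icc 0 (2*π) := by
    rintro z ⟨⟨t, ht, rfl⟩, hz⟩
    have hz' : ‖γ t‖ < 2^k := by
      rw [mem_ball, Complex.dist_eq, sub_zero] at hz
      exact hz
    rcases curve_loc γ hseg0 harc0 hseg harc t ht with ⟨x, hx⟩ | ⟨j, θ, hθ, hx⟩
    · left
      refine ⟨x, ?_, hx.symm⟩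
      rw [hx, Complex.norm_real, Real.norm_eq_abs] at hz'
      have := abs_le.mp hz'.le
      exact ⟨this.1, this.2⟩
    · right
      have habs : ‖γ t‖ = 2^j := by
        rw [hx, norm_mul, Complex.norm_exp]
        have h1 : ‖(2:ℂ)^j‖ = 2^j := by
          rw [norm_pow, Complex.norm_two]
        have h2 : ((θ:ℂ) * Complex.I).re = 0 := by simp
        rw [h1, h2, Real.exp_zero, mul_one]
      have hj : j < k := by
        have h2 : (2:ℝ)^j < 2^k := by rw [← habs]; exact hz'
        exact (pow_lt_pow_iff_right₀ (by norm_num : (1:ℝ) < 2)).mp h2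
      exact mem_iUnion₂.mpr ⟨j, Finset.mem_range.mpr hj, ⟨θ, hθ, hx.symm⟩⟩
  have hsegμ : μH[1] ((fun x:ℝ => (x:ℂ)) '' Icc (-(2^k:ℝ)) (2^k))
      = ENNReal.ofReal (2 * 2^k) := by
    rw [Complex.isometry_ofReal.hausdorffMeasure_image (Or.inl zero_le_one),
      MeasureTheory.hausdorffMeasure_real, Real.volume_Icc]
    congr 1
    ring
  have hcircμ : ∀ j : ℕ, μH[1] ((fun θ:ℝ => (2:ℂ)^j * Complex.exp ((θ:ℂ) * Complex.I)) '' Icc 0 (2*π))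
      ≤ ENNReal.ofReal ((2:ℝ)^j * (2*π)) := by
    intro j
    have := (circle_lipschitz ((2:ℂ)^j)).hausdorffMeasure_image_le zero_le_one (Icc 0 (2*π))
    rw [MeasureTheory.hausdorffMeasure_real, Real.volume_Icc, sub_zero] at this
    have habs : ‖(2:ℂ)^j‖ = 2^j := by rw [norm_pow, Complex.norm_two]
    calc μH[1] ((fun θ:ℝ => (2:ℂ)^j * Complex.exp ((θ:ℂ) * Complex.I)) '' Icc 0 (2*π))
        ≤ ↑((‖(2:ℂ)^j‖).toNNReal) ^ (1:ℝ) * ENNReal.ofReal (2*π) := this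
      _ = ENNReal.ofReal ((2:ℝ)^j) * ENNReal.ofReal (2*π) := by
          rw [ENNReal.rpow_one, habs]
          rfl
      _ = ENNReal.ofReal ((2:ℝ)^j * (2*π)) := by
          rw [← ENNReal.ofReal_mul (by positivity)]
  calc μH[1] (curveSet γ ∩ ball (0:ℂ) (2^k))
      ≤ μH[1] (((fun x:ℝ => (x:ℂ)) '' Icc (-(2^k:ℝ)) (2^k)) ∪
        ⋃ j ∈ Finset.range k,
          (fun θ:ℝ => (2:ℂ)^j * Complex.exp ((θ:ℂ) * Complex.I)) '' Icc 0 (2*π)) :=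
        measure_mono hsub
    _ ≤ μH[1] ((fun x:ℝ => (x:ℂ)) '' Icc (-(2^k:ℝ)) (2^k)) +
        μH[1] (⋃ j ∈ Finset.range k,
          (fun θ:ℝ => (2:ℂ)^j * Complex.exp ((θ:ℂ) * Complex.I)) '' Icc 0 (2*π)) :=
        measure_union_le _ _
    _ ≤ ENNReal.ofReal (2 * 2^k) + ∑ j ∈ Finset.range k, ENNReal.ofReal ((2:ℝ)^j * (2*π)) := by
        rw [hsegμ]
        exact add_le_add le_rfl ((measure_biUnion_finset_le _ _).trans
          (Finset.sum_le_sum fun j _ => hcircμ j))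
    _ ≤ ENNReal.ofReal (16 * 2^k) := by
        rw [← ENNReal.ofReal_sum_of_nonneg (fun j _ => by positivity),
          ← ENNReal.ofReal_add (by positivity) (Finset.sum_nonneg fun j _ => by positivity)]
        apply ENNReal.ofReal_le_ofReal
        have hgeom : ∑ j ∈ Finset.range k, (2:ℝ)^j = 2^k - 1 := by
          have := geom_sum_eq (by norm_num : (2:ℝ) ≠ 1) k
          rw [this]; norm_num
        rw [← Finset.sum_mul, hgeom]
        have h1 : (1:ℝ) ≤ 2^k := one_le_pow₀ (by norm_num)
        nlinarith [Real.pi_le_four]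

lemma curve_seg_lower (γ : ℝ → ℂ)
    (hseg : ∀ k : ℕ, 1 ≤ k →
      ∀ t ∈ Set.Icc (-π + (1 + 2 * π) * 2 ^ (k - 1)) (-π + (2 + 2 * π) * 2 ^ (k - 1)),
        γ t = (if Even k then 1 else -1) *
          ((2 : ℂ) ^ (k - 1) + ((t : ℂ) - ((-π + (1 + 2 * π) * 2 ^ (k - 1) : ℝ) : ℂ))))
    (k : ℕ) (hk : 1 ≤ k) :
    ENNReal.ofReal ((2:ℝ)^k / 16) ≤ μH[1] (curveSet γ ∩ ball (0:ℂ) (2^k)) := by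
  have hπ := Real.pi_pos
  set σ : ℂ := if Even k then 1 else -1 with hσdef
  have hσabs : ‖σ‖ = 1 := by
    rw [hσdef]
    by_cases hEv : Even k <;> simp [hEv]
  have h2k : (2:ℝ)^k = 2 * 2^(k-1) := by
    conv_lhs => rw [show k = (k-1)+1 by omega]
    ring
  have hp1 : (1:ℝ) ≤ 2^(k-1) := one_le_pow₀ (by norm_num)
  have hL : (fun x:ℝ => σ * (x:ℂ)) '' Ico ((2:ℝ)^(k-1)) (2^k) ⊆
      curveSet γ ∩ ball (0:ℂ) (2^k) := by
    rintro z ⟨x, hx, rfl⟩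
    set t : ℝ := -π + (1 + 2*π) * 2^(k-1) + (x - 2^(k-1)) with htdef
    have ht0 : 0 ≤ t := by
      rw [htdef]
      nlinarith [hx.1]
    have htmem : t ∈ Set.Icc (-π + (1 + 2*π) * 2^(k-1)) (-π + (2 + 2*π) * 2^(k-1)) := by
      constructor
      · rw [htdef]; linarith [hx.1]
      · rw [htdef]
        have := hx.2.le
        rw [h2k] at this
        linarith
    have hγt : γ t = σ * (x:ℂ) := by
      rw [hseg k hk t htmem, ← hσdef]
      congr 1
      rw [htdef]
      push_cast
      ring
    constructor
    · exact ⟨t, ht0, hγt⟩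
    · rw [mem_ball, Complex.dist_eq, sub_zero, norm_mul, hσabs, one_mul, Complex.norm_real, Real.norm_eq_abs,
        abs_of_pos (by linarith [hx.1] : (0:ℝ) < x)]
      exact hx.2
  have hiso : Isometry (fun x:ℝ => σ * (x:ℂ)) := by
    apply Isometry.of_dist_eq
    intro x y
    rw [Complex.dist_eq, Real.dist_eq, ← mul_sub, norm_mul, hσabs, one_mul,
      ← Complex.ofReal_sub, Complex.norm_real, Real.norm_eq_abs]
  calc ENNReal.ofReal ((2:ℝ)^k / 16)
      ≤ ENNReal.ofReal ((2:ℝ)^k - 2^(k-1)) := by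
        apply ENNReal.ofReal_le_ofReal
        rw [h2k]
        nlinarith
    _ = μH[1] ((fun x:ℝ => σ * (x:ℂ)) '' Ico ((2:ℝ)^(k-1)) (2^k)) := by
        rw [hiso.hausdorffMeasure_image (Or.inl zero_le_one),
          MeasureTheory.hausdorffMeasure_real, Real.volume_Ico]
    _ ≤ μH[1] (curveSet γ ∩ ball (0:ℂ) (2^k)) := measure_mono hL

lemma curve_annulus (γ : ℝ → ℂ)
    (harc : ∀ k : ℕ, 1 ≤ k →
      ∀ t ∈ Set.Icc (-π + (2 + 2 * π) * 2 ^ (k - 1)) (-π + (1 + 2 * π) * 2 ^ k),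
        γ t = (if Even k then 1 else -1) * (2 : ℂ) ^ k *
          Complex.exp (Complex.I *
            (((t : ℂ) - ((-π + (2 + 2 * π) * 2 ^ (k - 1) : ℝ) : ℂ)) / (2 : ℂ) ^ k)))
    (k : ℕ) (hk : 1 ≤ k) (ε : ℝ) (hε : 0 < ε) :
    ENNReal.ofReal (π * 2 ^ k) ≤
      μH[1] (curveSet γ ∩ (ball (0 : ℂ) (2 ^ k + ε) \ ball (0 : ℂ) (2 ^ k))) := by
  have hπ := Real.pi_pos
  set c : ℂ := (if Even k then 1 else -1) * (2:ℂ)^k with hcdef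
  have hcabs : ‖c‖ = 2^k := by
    rw [hcdef, norm_mul, norm_pow, Complex.norm_two]
    by_cases hEv : Even k <;> simp [hEv]
  have h2k : (2:ℝ)^k = 2 * 2^(k-1) := by
    conv_lhs => rw [show k = (k-1)+1 by omega]
    ring
  have hp1 : (1:ℝ) ≤ 2^(k-1) := one_le_pow₀ (by norm_num)
  have hpk : (0:ℝ) < 2^k := by positivity
  have hA : (fun θ:ℝ => c * Complex.exp ((θ:ℂ) * Complex.I)) '' Icc 0 π ⊆
      curveSet γ ∩ (ball (0 : ℂ) (2 ^ k + ε) \ ball (0 : ℂ) (2 ^ k)) := by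
    rintro z ⟨θ, hθ, rfl⟩
    set t : ℝ := -π + (2 + 2*π) * 2^(k-1) + θ * 2^k with htdef
    have ht0 : 0 ≤ t := by
      rw [htdef]
      nlinarith [hθ.1, hθ.2]
    have htmem : t ∈ Set.Icc (-π + (2 + 2*π) * 2^(k-1)) (-π + (1 + 2*π) * 2^k) := by
      constructor
      · rw [htdef]; nlinarith [hθ.1]
      · rw [htdef, h2k]; nlinarith [hθ.2]
    have hγt : γ t = c * Complex.exp ((θ:ℂ) * Complex.I) := by
      rw [harc k hk t htmem, ← hcdef]
      congr 1
      have hpc : ((2:ℂ)^k) ≠ 0 := pow_ne_zero k two_ne_zero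
      rw [htdef]
      push_cast
      field_simp
      ring_nf; rw [mul_assoc, inv_pow, inv_mul_cancel₀ hpc, mul_one]
    have habs : ‖c * Complex.exp ((θ:ℂ) * Complex.I)‖ = 2^k := by
      rw [norm_mul, hcabs, Complex.norm_exp]
      simp
    refine ⟨⟨t, ht0, hγt⟩, ?_, ?_⟩
    · rw [mem_ball, Complex.dist_eq, sub_zero, habs]
      linarith
    · rw [mem_ball, Complex.dist_eq, sub_zero, habs]
      simp
  calc ENNReal.ofReal (π * 2 ^ k)
      = ENNReal.ofReal (π * ‖c‖) := by rw [hcabs]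
    _ ≤ μH[1] ((fun θ:ℝ => c * Complex.exp ((θ:ℂ) * Complex.I)) '' Icc 0 π) := arc_lower c
    _ ≤ _ := measure_mono hA

/-- the Tessera curve space `(X_T, d, Λ)` does not satisfy the annular
decay property (AD): `Λ(B(0, 2^k + ε) ∖ B(0, 2^k)) ≥ π 2^k` for every `k ≥ 1`, `ε > 0`,
while `Λ(B(0, 2^k))` is comparable to `2^k` uniformly in `k`. -/
theorem tessera_not_annularDecay
    (γ : ℝ → ℂ)
    (hseg0 : ∀ t ∈ Set.Icc (0 : ℝ) 1, γ t = (t : ℂ))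
    (harc0 : ∀ t ∈ Set.Icc (1 : ℝ) (1 + π),
      γ t = Complex.exp (Complex.I * ((t : ℂ) - 1)))
    (hseg : ∀ k : ℕ, 1 ≤ k →
      ∀ t ∈ Set.Icc (-π + (1 + 2 * π) * 2 ^ (k - 1)) (-π + (2 + 2 * π) * 2 ^ (k - 1)),
        γ t = (if Even k then 1 else -1) *
          ((2 : ℂ) ^ (k - 1) + ((t : ℂ) - ((-π + (1 + 2 * π) * 2 ^ (k - 1) : ℝ) : ℂ))))
    (harc : ∀ k : ℕ, 1 ≤ k →
      ∀ t ∈ Set.Icc (-π + (2 + 2 * π) * 2 ^ (k - 1)) (-π + (1 + 2 * π) * 2 ^ k),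
        γ t = (if Even k then 1 else -1) * (2 : ℂ) ^ k *
          Complex.exp (Complex.I *
            (((t : ℂ) - ((-π + (2 + 2 * π) * 2 ^ (k - 1) : ℝ) : ℂ)) / (2 : ℂ) ^ k))) :
    (∀ k : ℕ, 1 ≤ k → ∀ ε : ℝ, 0 < ε →
      ENNReal.ofReal (π * 2 ^ k) ≤
        μH[1] (curveSet γ ∩ (ball (0 : ℂ) (2 ^ k + ε) \ ball (0 : ℂ) (2 ^ k)))) ∧
    (∃ c : ℝ, 0 < c ∧ ∀ k : ℕ, 1 ≤ k →
      ENNReal.ofReal ((2 : ℝ) ^ k / c) ≤ μH[1] (curveSet γ ∩ ball (0 : ℂ) (2 ^ k)) ∧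
      μH[1] (curveSet γ ∩ ball (0 : ℂ) (2 ^ k)) ≤ ENNReal.ofReal (c * 2 ^ k)) ∧
    ¬ (∃ (η : ℝ) (C : ℝ≥0), 0 < η ∧ ∀ z ∈ curveSet γ, ∀ r s : ℝ, 0 < s → s < r →
        μH[1] ((curveSet γ ∩ ball z r) \ ball z (r - s)) ≤
          (C : ℝ≥0∞) * ENNReal.ofReal ((s / r) ^ η) *
            μH[1] (curveSet γ ∩ ball z r)) := by
  have hπ := Real.pi_pos
  have hann := curve_annulus γ harc
  have hupper := curve_upper γ hseg0 harc0 hseg harc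
  have hlower := curve_seg_lower γ hseg
  refine ⟨fun k hk ε hε => hann k hk ε hε,
    ⟨16, by norm_num, fun k hk => ⟨hlower k hk, hupper k⟩⟩, ?_⟩
  rintro ⟨η, C, hη, hAD⟩
  have h0mem : (0:ℂ) ∈ curveSet γ := by
    refine ⟨0, Set.mem_Ici.mpr (le_refl 0), ?_⟩
    rw [hseg0 0 ⟨le_refl _, zero_le_one⟩]
    simp
  set s : ℝ := min 1 ((π / (64 * (C:ℝ) + 1)) ^ (1/η : ℝ)) with hsdef
  have hCpos : (0:ℝ) < 64 * (C:ℝ) + 1 := by positivity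
  have hbase : (0:ℝ) < π / (64 * (C:ℝ) + 1) := div_pos hπ hCpos
  have hspos : 0 < s := lt_min one_pos (Real.rpow_pos_of_pos hbase _)
  have hs1 : s ≤ 1 := min_le_left _ _
  have hsη : s ^ η ≤ π / (64 * (C:ℝ) + 1) := by
    calc s ^ η ≤ ((π / (64 * (C:ℝ) + 1)) ^ (1/η : ℝ)) ^ η :=
          Real.rpow_le_rpow hspos.le (min_le_right _ _) hη.le
      _ = π / (64 * (C:ℝ) + 1) := by
          rw [← Real.rpow_mul hbase.le, one_div, inv_mul_cancel₀ (ne_of_gt hη), Real.rpow_one]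
  have hlt : s < 2 + s := by linarith
  have hle := hAD 0 h0mem (2 + s) s hspos hlt
  have hset : (curveSet γ ∩ ball (0:ℂ) (2 + s)) \ ball (0:ℂ) (2 + s - s)
      = curveSet γ ∩ (ball (0:ℂ) ((2:ℝ)^1 + s) \ ball (0:ℂ) ((2:ℝ)^1)) := by
    rw [Set.inter_diff_assoc]
    norm_num
  have hLHS : ENNReal.ofReal (2 * π) ≤
      μH[1] ((curveSet γ ∩ ball (0:ℂ) (2 + s)) \ ball (0:ℂ) (2 + s - s)) := by
    rw [hset]
    calc ENNReal.ofReal (2 * π) = ENNReal.ofReal (π * 2^1) := by ring_nf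
      _ ≤ _ := hann 1 (le_refl 1) s hspos
  have hμball : μH[1] (curveSet γ ∩ ball (0:ℂ) (2 + s)) ≤ ENNReal.ofReal 64 := by
    have hsub : curveSet γ ∩ ball (0:ℂ) (2 + s) ⊆ curveSet γ ∩ ball (0:ℂ) ((2:ℝ)^2) :=
      Set.inter_subset_inter_right _ (ball_subset_ball (by norm_num; linarith))
    calc μH[1] (curveSet γ ∩ ball (0:ℂ) (2 + s))
        ≤ μH[1] (curveSet γ ∩ ball (0:ℂ) ((2:ℝ)^2)) := measure_mono hsub
      _ ≤ ENNReal.ofReal (16 * 2^2) := hupper 2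
      _ = ENNReal.ofReal 64 := by norm_num
  have hratio : (s / (2 + s)) ^ η ≤ π / (64 * (C:ℝ) + 1) := by
    calc (s / (2 + s)) ^ η ≤ s ^ η := by
          apply Real.rpow_le_rpow (div_nonneg hspos.le (by linarith)) ?_ hη.le
          rw [div_le_iff₀ (by linarith)]
          nlinarith
      _ ≤ _ := hsη
  have hRHS : (C : ℝ≥0∞) * ENNReal.ofReal ((s / (2 + s)) ^ η) *
      μH[1] (curveSet γ ∩ ball (0:ℂ) (2 + s)) < ENNReal.ofReal (2 * π) := by
    have hreal : (C:ℝ) * (π / (64 * (C:ℝ) + 1)) * 64 < 2 * π := by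
      have heq : (C:ℝ) * (π / (64 * (C:ℝ) + 1)) * 64 = 64 * (C:ℝ) * π / (64 * (C:ℝ) + 1) := by
        field_simp
      rw [heq, div_lt_iff₀ hCpos]
      nlinarith [mul_nonneg (NNReal.coe_nonneg C) hπ.le]
    calc (C : ℝ≥0∞) * ENNReal.ofReal ((s / (2 + s)) ^ η) *
        μH[1] (curveSet γ ∩ ball (0:ℂ) (2 + s))
        ≤ (C : ℝ≥0∞) * ENNReal.ofReal (π / (64 * (C:ℝ) + 1)) * ENNReal.ofReal 64 :=
          mul_le_mul' (mul_le_mul' le_rfl (ENNReal.ofReal_le_ofReal hratio)) hμball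
      _ = ENNReal.ofReal ((C:ℝ) * (π / (64 * (C:ℝ) + 1)) * 64) := by
          rw [← ENNReal.ofReal_coe_nnreal,
            ← ENNReal.ofReal_mul (by positivity), ← ENNReal.ofReal_mul (by positivity)]
      _ < ENNReal.ofReal (2 * π) := (ENNReal.ofReal_lt_ofReal_iff (by positivity)).mpr hreal
  exact lt_irrefl _ (lt_of_le_of_lt (hLHS.trans hle) hRHS)
end
end
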